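/- arXiv:1409.2978 — 9 statements merged into one kernel-verified Lean document; each statement's English description precedes it below -/
import Mathlib

section
/- For any configuration C, the negated configuration ¬̃C equals the set of all minimal non-trivial clauses E such that the term ¬E logically implies the conjunction of clauses in C; i.e., ¬̃C = { E : ¬E ⊨ C and for every proper subclause E' ⊊ E, ¬E' ⊭ C }. -/
/-- A literal over Boolean variables of type `X`: a variable together with a sign. -/
abbrev Lit (X : Type) := X × Bool

/-- A clause: a finite set of literals, interpreted disjunctively. -/
abbrev Clause (X : Type) := Finset (Lit X)

/-- A configuration: a finite set of clauses, interpreted conjunctively. -/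
abbrev Config (X : Type) := Finset (Clause X)

/-- The negation of a literal. -/
def negLit {X : Type} (l : Lit X) : Lit X := (l.1, !l.2)

/-- A clause (or term) is trivial if it contains both a variable and its negation. -/
def IsTrivialClause {X : Type} (C : Clause X) : Prop :=
  ∃ v : X, (v, true) ∈ C ∧ (v, false) ∈ C

/-- A total assignment satisfies a literal. -/
def SatLit {X : Type} (α : X → Bool) (l : Lit X) : Prop := α l.1 = l.2

/-- A total assignment satisfies a clause (some literal is true). -/
def SatClause {X : Type} (α : X → Bool) (C : Clause X) : Prop := ∃ l ∈ C, SatLit α l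

/-- A total assignment satisfies a term (all literals are true). -/
def SatTerm {X : Type} (α : X → Bool) (T : Finset (Lit X)) : Prop := ∀ l ∈ T, SatLit α l

/-- A total assignment satisfies a configuration (all clauses are true). -/
def SatConfig {X : Type} (α : X → Bool) (𝒞 : Config X) : Prop := ∀ C ∈ 𝒞, SatClause α C

/-- The term `¬E` negating a clause `E`. -/
def negTerm {X : Type} [DecidableEq X] (E : Clause X) : Finset (Lit X) := E.image negLit

/-- The "raw" negated configuration: unrolling the inductive definition
`¬̃∅ = {0}`, `¬̃(𝒞 ∪ {D}) = { E ∨ ¬a : E ∈ ¬̃𝒞, a ∈ D }` (before removing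
trivial and subsumed clauses) gives exactly the clauses obtained by picking one
literal from each clause of `𝒞` and negating it. -/
def negConfRaw {X : Type} [DecidableEq X] (𝒞 : Config X) : Set (Clause X) :=
  { E | ∃ f : {C // C ∈ 𝒞} → Lit X,
      (∀ C : {C // C ∈ 𝒞}, f C ∈ C.1) ∧
      E = 𝒞.attach.image (fun C => negLit (f C)) }

/-- The negated configuration `¬̃𝒞`: the raw negated configuration with
trivial clauses removed and subsumed clauses removed. -/
def negConf {X : Type} [DecidableEq X] (𝒞 : Config X) : Set (Clause X) :=
  { E | E ∈ negConfRaw 𝒞 ∧ ¬ IsTrivialClause E ∧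
      ∀ E' ∈ negConfRaw 𝒞, ¬ IsTrivialClause E' → ¬ E' ⊂ E }

lemma negLit_negLit {X : Type} (l : Lit X) : negLit (negLit l) = l := by
  cases l; simp [negLit]

lemma mem_negTerm {X : Type} [DecidableEq X] {E : Clause X} {a : Lit X} :
    a ∈ negTerm E ↔ negLit a ∈ E := by
  constructor
  · intro ha
    simp only [negTerm, Finset.mem_image] at ha
    obtain ⟨b, hb, rfl⟩ := ha
    simpa [negLit_negLit] using hb
  · intro ha
    simp only [negTerm, Finset.mem_image]
    exact ⟨negLit a, ha, negLit_negLit a⟩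

lemma subset_nontrivial {X : Type} {E' E : Clause X} (hs : E' ⊆ E)
    (hE : ¬ IsTrivialClause E) : ¬ IsTrivialClause E' :=
  fun ⟨v, h1, h2⟩ => hE ⟨v, hs h1, hs h2⟩

lemma sat_iff {X : Type} [DecidableEq X] (𝒞 : Config X)
    (h : ∀ C ∈ 𝒞, ¬ IsTrivialClause C) (E : Clause X) (hE : ¬ IsTrivialClause E) :
    (∀ α : X → Bool, SatTerm α (negTerm E) → SatConfig α 𝒞) ↔
      ∀ C ∈ 𝒞, ∃ a ∈ C, negLit a ∈ E := by
  constructor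
  · intro himp C hC
    by_contra hcon
    push_neg at hcon
    set α : X → Bool := fun v =>
      if (v, true) ∈ negTerm E then true
      else if (v, false) ∈ negTerm E then false
      else if (v, true) ∈ C then false else true with hα
    have hsat : SatTerm α (negTerm E) := by
      rintro ⟨v, s⟩ hl
      cases s with
      | true => simp [SatLit, hα, hl]
      | false =>
        have h1 : (v, true) ∉ negTerm E := by
          intro h1
          have e1 : (v, true) ∈ E := by simpa [negLit] using mem_negTerm.mp hl
          have e2 : (v, false) ∈ E := by simpa [negLit] using mem_negTerm.mp h1
          exact hE ⟨v, e1, e2⟩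
        simp [SatLit, hα, hl, h1]
    have hsatC := himp α hsat C hC
    obtain ⟨⟨v, s⟩, hvC, hv⟩ := hsatC
    have hnot : (v, s) ∉ negTerm E := by
      intro hmem
      exact hcon _ hvC (mem_negTerm.mp hmem)
    cases s with
    | true =>
      have h2 : (v, false) ∉ negTerm E ∨ True := Or.inr trivial
      simp only [SatLit, hα] at hv
      rw [if_neg hnot] at hv
      by_cases h3 : (v, false) ∈ negTerm E
      · rw [if_pos h3] at hv; exact absurd hv (by simp)
      · rw [if_neg h3, if_pos hvC] at hv; exact absurd hv (by simp)
    | false =>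
      simp only [SatLit, hα] at hv
      by_cases h1 : (v, true) ∈ negTerm E
      · rw [if_pos h1] at hv; exact absurd hv (by simp)
      · rw [if_neg h1, if_neg hnot] at hv
        by_cases h3 : (v, true) ∈ C
        · exact h C hC ⟨v, h3, hvC⟩
        · rw [if_neg h3] at hv; exact absurd hv (by simp)
  · intro hP α hsat C hC
    obtain ⟨a, haC, haE⟩ := hP C hC
    refine ⟨a, haC, ?_⟩
    have : a ∈ negTerm E := mem_negTerm.mpr haE
    have := hsat a this
    exact this

lemma raw_iff {X : Type} [DecidableEq X] (𝒞 : Config X) (E : Clause X) :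
    (∀ C ∈ 𝒞, ∃ a ∈ C, negLit a ∈ E) ↔ ∃ E' ∈ negConfRaw 𝒞, E' ⊆ E := by
  constructor
  · intro hP
    choose f hf1 hf2 using fun (C : {C // C ∈ 𝒞}) => hP C.1 C.2
    refine ⟨𝒞.attach.image (fun C => negLit (f C)), ⟨f, hf1, rfl⟩, ?_⟩
    intro l hl
    simp only [Finset.mem_image, Finset.mem_attach, true_and] at hl
    obtain ⟨C, rfl⟩ := hl
    exact hf2 C
  · rintro ⟨E', ⟨f, hf1, rfl⟩, hsub⟩ C hC
    refine ⟨f ⟨C, hC⟩, hf1 _, hsub ?_⟩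
    simp only [Finset.mem_image, Finset.mem_attach, true_and]
    exact ⟨⟨C, hC⟩, rfl⟩

/-- the negated configuration `¬̃𝒞` equals the set of all minimal
non-trivial clauses `E` such that the term `¬E` logically implies the
conjunction of the clauses of `𝒞`. -/
theorem negConf_eq_minimal_implying_clauses {X : Type} [DecidableEq X] (𝒞 : Config X)
    (h : ∀ C ∈ 𝒞, ¬ IsTrivialClause C) :
    negConf 𝒞 =
      { E : Clause X | ¬ IsTrivialClause E ∧
          (∀ α : X → Bool, SatTerm α (negTerm E) → SatConfig α 𝒞) ∧
          ∀ E' ⊂ E, ¬ (∀ α : X → Bool, SatTerm α (negTerm E') → SatConfig α 𝒞) } := by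
  ext E
  simp only [negConf, Set.mem_setOf_eq]
  constructor
  · rintro ⟨hraw, hE, hmin⟩
    have hPE : ∀ C ∈ 𝒞, ∃ a ∈ C, negLit a ∈ E :=
      (raw_iff 𝒞 E).mpr ⟨E, hraw, le_refl E⟩
    refine ⟨hE, (sat_iff 𝒞 h E hE).mpr hPE, ?_⟩
    intro E' hE'ss himp'
    have hE' : ¬ IsTrivialClause E' := subset_nontrivial hE'ss.subset hE
    have hPE' := (sat_iff 𝒞 h E' hE').mp himp'
    obtain ⟨E'', hE''raw, hE''sub⟩ := (raw_iff 𝒞 E').mp hPE'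
    have hE'' : ¬ IsTrivialClause E'' :=
      subset_nontrivial (hE''sub.trans hE'ss.subset) hE
    exact hmin E'' hE''raw hE'' (lt_of_le_of_lt hE''sub hE'ss)
  · rintro ⟨hE, himp, hmin⟩
    have hPE := (sat_iff 𝒞 h E hE).mp himp
    obtain ⟨E', hE'raw, hE'sub⟩ := (raw_iff 𝒞 E).mp hPE
    have hE' : ¬ IsTrivialClause E' := subset_nontrivial hE'sub hE
    have hEeq : E' = E := by
      by_contra hne
      have hss : E' ⊂ E := lt_of_le_of_ne hE'sub hne
      exact hmin E' hss ((sat_iff 𝒞 h E' hE').mpr ((raw_iff 𝒞 E').mpr ⟨E', hE'raw, le_refl E'⟩))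
    refine ⟨hEeq ▸ hE'raw, hE, ?_⟩
    intro E'' hE''raw hE'' hss
    exact hmin E'' hss ((sat_iff 𝒞 h E'' hE'').mpr ((raw_iff 𝒞 E'').mpr ⟨E'', hE''raw, le_refl E''⟩))
end

section
/- If configuration C logically implies configuration C' (every assignment satisfying all clauses of C satisfies all clauses of C'), then for every clause E in the negated configuration ¬̃C there exists a clause E' in ¬̃C' with E' ⊆ E (i.e., E is a weakening of E'). -/
/-- if configuration `𝒞` logically implies configuration `𝒞'`, then
every clause of `¬̃𝒞` is a weakening of some clause of `¬̃𝒞'`. -/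
theorem negConf_weakening {X : Type} [DecidableEq X] (𝒞 𝒞' : Config X)
    (h : ∀ C ∈ 𝒞, ¬ IsTrivialClause C) (h' : ∀ C ∈ 𝒞', ¬ IsTrivialClause C)
    (himp : ∀ α : X → Bool, SatConfig α 𝒞 → SatConfig α 𝒞') :
    ∀ E ∈ negConf 𝒞, ∃ E' ∈ negConf 𝒞', E' ⊆ E := by
  rintro E ⟨⟨f, hf, hEeq⟩, hEnt, hEmin⟩
  -- membership of negated picks in E
  have hmemE : ∀ C : {C // C ∈ 𝒞}, negLit (f C) ∈ E := by
    intro C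
    rw [hEeq]
    exact Finset.mem_image.mpr ⟨C, Finset.mem_attach _ _, rfl⟩
  -- Step 1: each clause of 𝒞' contains a literal whose negation is in E
  have key : ∀ C' ∈ 𝒞', ∃ l ∈ C', negLit l ∈ E := by
    intro C' hC'
    by_contra hcon
    push_neg at hcon
    set α : X → Bool := fun v =>
      if (v, true) ∈ E then false
      else if (v, true) ∈ C' then false
      else true with hα
    -- α falsifies every literal of E
    have hfalsE : ∀ l ∈ E, α l.1 = !l.2 := by
      rintro ⟨v, s⟩ hl
      cases s with
      | true => simp [hα, hl]
      | false =>
        have h1 : (v, true) ∉ E := fun ht => hEnt ⟨v, ht, hl⟩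
        have h2 : (v, true) ∉ C' := fun ht => hcon (v, true) ht hl
        simp [hα, h1, h2]
    -- α falsifies every literal of C'
    have hfalsC' : ∀ l ∈ C', α l.1 = !l.2 := by
      rintro ⟨v, s⟩ hl
      cases s with
      | true =>
        by_cases hE : (v, true) ∈ E
        · simp [hα, hE]
        · simp [hα, hE, hl]
      | false =>
        have h1 : (v, true) ∉ E := fun ht => hcon (v, false) hl ht
        have h2 : (v, true) ∉ C' := fun ht => h' C' hC' ⟨v, ht, hl⟩
        simp [hα, h1, h2]
    -- α satisfies 𝒞
    have hsat : SatConfig α 𝒞 := by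
      intro C hC
      refine ⟨f ⟨C, hC⟩, hf ⟨C, hC⟩, ?_⟩
      have h1 := hfalsE _ (hmemE ⟨C, hC⟩)
      simpa [negLit, SatLit] using h1
    obtain ⟨l, hl, hsl⟩ := himp α hsat C' hC'
    have := hfalsC' l hl
    rw [SatLit] at hsl
    rw [hsl] at this
    exact (Bool.not_ne_self l.2 this.symm).elim
  choose g hg1 hg2 using key
  -- the raw clause from these choices
  set E₀ : Clause X := 𝒞'.attach.image (fun C => negLit (g C.1 C.2)) with hE₀
  have hE₀raw : E₀ ∈ negConfRaw 𝒞' := ⟨fun C => g C.1 C.2, fun C => hg1 C.1 C.2, rfl⟩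
  have hE₀sub : E₀ ⊆ E := by
    intro l hl
    rw [hE₀] at hl
    obtain ⟨C, _, rfl⟩ := Finset.mem_image.mp hl
    exact hg2 C.1 C.2
  have hE₀nt : ¬ IsTrivialClause E₀ := by
    rintro ⟨v, h1, h2⟩
    exact hEnt ⟨v, hE₀sub h1, hE₀sub h2⟩
  -- take a minimal nontrivial raw clause below E₀
  set S : Set (Clause X) := {W | W ∈ negConfRaw 𝒞' ∧ ¬ IsTrivialClause W ∧ W ⊆ E₀} with hS
  obtain ⟨m, hmS, hmmin⟩ := (Finset.isWellFounded_ssubset.wf).has_min S ⟨E₀, hE₀raw, hE₀nt, subset_rfl⟩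
  refine ⟨m, ⟨hmS.1, hmS.2.1, ?_⟩, hmS.2.2.trans hE₀sub⟩
  intro W hWraw hWnt hWss
  exact hmmin W ⟨hWraw, hWnt, hWss.subset.trans hmS.2.2⟩ hWss
end

section
/- Let F be an unsatisfiable k-CNF formula (not containing the empty clause) that has a resolution refutation in clause space s. Then F has a resolution refutation of width at most s + k − 3. -/
/-- `E` is a resolvent of clauses `C` and `D`: there is a variable `v` occurring
positively (sign `b`) in `C` and negatively in `D`, and `E = (C ∖ {vᵇ}) ∪ (D ∖ {v^¬b})`. -/
def IsResolvent {X : Type} [DecidableEq X] (E C D : Clause X) : Prop :=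
  ∃ (v : X) (b : Bool), (v, b) ∈ C ∧ (v, !b) ∈ D ∧
    E = C.erase (v, b) ∪ D.erase (v, !b)

/-- A single step of a resolution derivation from the CNF formula `F`:
axiom download, inference by resolution, inference by weakening, or erasure. -/
inductive ResStep {X : Type} [DecidableEq X] (F : Set (Clause X)) :
    Config X → Config X → Prop
  | download (𝒞 : Config X) (A : Clause X) (hA : A ∈ F) :
      ResStep F 𝒞 (insert A 𝒞)
  | infer (𝒞 : Config X) (E C D : Clause X) (hC : C ∈ 𝒞) (hD : D ∈ 𝒞)
      (h : IsResolvent E C D) : ResStep F 𝒞 (insert E 𝒞)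
  | weaken (𝒞 : Config X) (E C : Clause X) (hC : C ∈ 𝒞) (h : C ⊆ E) :
      ResStep F 𝒞 (insert E 𝒞)
  | erase (𝒞 : Config X) (C : Clause X) (hC : C ∈ 𝒞) :
      ResStep F 𝒞 (𝒞.erase C)

/-- A resolution refutation of the CNF formula `F`: a sequence of configurations
starting from the empty configuration, ending with a configuration containing the
empty clause, where each configuration follows from the previous by a legal step. -/
structure ResRefutation {X : Type} [DecidableEq X] (F : Set (Clause X)) where
  len : ℕ
  conf : ℕ → Config X
  init : conf 0 = ∅
  final : (∅ : Clause X) ∈ conf len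
  step : ∀ t < len, ResStep F (conf t) (conf (t + 1))

/-- The refutation has (clause) space at most `s`. -/
def ResRefutation.spaceLE {X : Type} [DecidableEq X] {F : Set (Clause X)}
    (π : ResRefutation F) (s : ℕ) : Prop :=
  ∀ t ≤ π.len, (π.conf t).card ≤ s

/-- The refutation has width at most `w`. -/
def ResRefutation.widthLE {X : Type} [DecidableEq X] {F : Set (Clause X)}
    (π : ResRefutation F) (w : ℕ) : Prop :=
  ∀ t ≤ π.len, ∀ C ∈ π.conf t, C.card ≤ w


namespace SUBW

set_option linter.unusedSectionVars false

variable {X : Type} [DecidableEq X]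

@[simp] lemma negLit_negLit (l : Lit X) : negLit (negLit l) = l := by
  simp [negLit]

lemma negLit_injective : Function.Injective (negLit (X := X)) := by
  intro a b h
  have := congrArg negLit h
  simpa using this

lemma negLit_ne (l : Lit X) : negLit l ≠ l := by
  cases l with
  | mk v b => cases b <;> simp [negLit]

/-- The set of negations of the literals of a partial assignment. -/
def negs (α : Finset (Lit X)) : Finset (Lit X) := α.image negLit

@[simp] lemma mem_negs {α : Finset (Lit X)} {l : Lit X} :
    l ∈ negs α ↔ negLit l ∈ α := by
  constructor
  · rintro h
    obtain ⟨m, hm, rfl⟩ := Finset.mem_image.1 h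
    simpa using hm
  · intro h
    exact Finset.mem_image.2 ⟨negLit l, h, by simp⟩

lemma negs_card (α : Finset (Lit X)) : (negs α).card = α.card :=
  Finset.card_image_of_injective _ negLit_injective

lemma negs_mono {α β : Finset (Lit X)} (h : α ⊆ β) : negs α ⊆ negs β :=
  Finset.image_subset_image h

/-- Consistency of a partial assignment seen as a set of literals. -/
def Consistent (α : Finset (Lit X)) : Prop := ∀ l ∈ α, negLit l ∉ α

/-- Clauses derivable from `F` by resolution, all of width at most `w`. -/
inductive Der (F : Set (Clause X)) (w : ℕ) : Clause X → Prop
  | ax {A : Clause X} (hA : A ∈ F) (hw : A.card ≤ w) : Der F w A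
  | res {E C D : Clause X} (hC : Der F w C) (hD : Der F w D)
      (h : IsResolvent E C D) (hw : E.card ≤ w) : Der F w E

/-- A good partial assignment: consistent and falsifying no derivable clause. -/
def Good (F : Set (Clause X)) (w : ℕ) (α : Finset (Lit X)) : Prop :=
  Consistent α ∧ ∀ C, Der F w C → ¬ C ⊆ negs α

/-- Partial satisfaction of a clause. -/
def SatP (α : Finset (Lit X)) (C : Clause X) : Prop := ∃ l ∈ C, l ∈ α

lemma SatP.mono {α α' : Finset (Lit X)} {C : Clause X} (h : SatP α C)
    (hsub : α ⊆ α') : SatP α' C := by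
  obtain ⟨l, hl, hlα⟩ := h
  exact ⟨l, hl, hsub hlα⟩

lemma Good.mono {F : Set (Clause X)} {w : ℕ} {α β : Finset (Lit X)}
    (hβ : β ⊆ α) (h : Good F w α) : Good F w β := by
  refine ⟨fun l hl hnl => h.1 l (hβ hl) (hβ hnl), fun C hC hsub => h.2 C hC ?_⟩
  exact hsub.trans (negs_mono hβ)

lemma Good.empty {F : Set (Clause X)} {w : ℕ} (h : ¬ Der F w (∅ : Clause X)) :
    Good F w (∅ : Finset (Lit X)) := by
  refine ⟨fun l hl => absurd hl (Finset.notMem_empty l), fun C hC hsub => h ?_⟩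
  have : C = ∅ := by
    apply Finset.subset_empty.1
    intro l hl
    have := hsub hl
    simp [negs] at this
  exact this ▸ hC

/-- Shrink a good assignment to one of small domain still satisfying a family. -/
lemma shrink {F : Set (Clause X)} {w : ℕ} {α : Finset (Lit X)} {N : Finset (Clause X)}
    (hg : Good F w α) (hsat : ∀ C ∈ N, SatP α C) :
    ∃ β, β ⊆ α ∧ Good F w β ∧ (∀ C ∈ N, SatP β C) ∧ β.card ≤ N.card := by
  classical
  choose f hf1 hf2 using hsat
  refine ⟨N.attach.image (fun C => f C.1 C.2), ?_, ?_, ?_, ?_⟩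
  · intro l hl
    obtain ⟨C, _, rfl⟩ := Finset.mem_image.1 hl
    exact hf2 _ _
  · exact hg.mono (by
      intro l hl
      obtain ⟨C, _, rfl⟩ := Finset.mem_image.1 hl
      exact hf2 _ _)
  · intro C hC
    exact ⟨f C hC, hf1 C hC, Finset.mem_image.2 ⟨⟨C, hC⟩, Finset.mem_attach _ _, rfl⟩⟩
  · exact (Finset.card_image_le).trans (by simp)

lemma resolvent_sat {α : Finset (Lit X)} {E C D : Clause X}
    (hcons : Consistent α) (hC : SatP α C) (hD : SatP α D)
    (h : IsResolvent E C D) : SatP α E := by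
  obtain ⟨v, b, hvC, hvD, rfl⟩ := h
  obtain ⟨lC, hlC, hlCα⟩ := hC
  obtain ⟨lD, hlD, hlDα⟩ := hD
  by_cases hC' : lC = (v, b)
  · have hne : lD ≠ (v, !b) := by
      intro h'
      subst h'
      subst hC'
      exact hcons (v, b) hlCα (by simpa [negLit] using hlDα)
    exact ⟨lD, Finset.mem_union.2 (Or.inr (Finset.mem_erase.2 ⟨hne, hlD⟩)), hlDα⟩
  · exact ⟨lC, Finset.mem_union.2 (Or.inl (Finset.mem_erase.2 ⟨hC', hlC⟩)), hlCα⟩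

/-- Clause-extension lemma: a good assignment can be extended by at most one
literal to satisfy a derivable clause, provided widths fit. -/
lemma clause_ext {F : Set (Clause X)} {w : ℕ} (α : Finset (Lit X))
    (hg : Good F w α) :
    ∀ n : ℕ, ∀ A : Clause X, Der F w A → (A \ negs α).card ≤ n →
      n + α.card ≤ w + 1 →
      ∃ α', α ⊆ α' ∧ Good F w α' ∧ α'.card ≤ α.card + 1 ∧ SatP α' A := by
  intro n
  induction n with
  | zero =>
    intro A hA hcard _
    exfalso
    have hsub : A ⊆ negs α := by
      intro l hl
      by_contra hln
      have : l ∈ A \ negs α := Finset.mem_sdiff.2 ⟨hl, hln⟩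
      have := Finset.card_pos.2 ⟨l, this⟩
      omega
    exact hg.2 A hA hsub
  | succ n ih =>
    intro A hA hcard hw
    by_cases hempty : (A \ negs α) = ∅
    · exfalso
      exact hg.2 A hA (fun l hl => by
        by_contra hln
        exact Finset.notMem_empty l (hempty ▸ Finset.mem_sdiff.2 ⟨hl, hln⟩))
    · obtain ⟨l, hl⟩ := Finset.nonempty_iff_ne_empty.2 hempty
      have hlA : l ∈ A := (Finset.mem_sdiff.1 hl).1
      have hlnn : l ∉ negs α := (Finset.mem_sdiff.1 hl).2
      have hnegl : negLit l ∉ α := by simpa using hlnn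
      by_cases hlα : l ∈ α
      · exact ⟨α, Finset.Subset.refl _, hg, Nat.le_succ _, ⟨l, hlA, hlα⟩⟩
      · by_cases hgood : Good F w (insert l α)
        · exact ⟨insert l α, Finset.subset_insert _ _, hgood,
            by simpa using Finset.card_insert_le _ _, ⟨l, hlA, Finset.mem_insert_self _ _⟩⟩
        · have hcons : Consistent (insert l α) := by
            intro m hm
            rcases Finset.mem_insert.1 hm with rfl | hm'
            · intro hcontra
              rcases Finset.mem_insert.1 hcontra with h' | h'
              · exact negLit_ne m h'
              · exact hnegl h'
            · intro hcontra
              rcases Finset.mem_insert.1 hcontra with h' | h'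
              · apply hlnn
                refine mem_negs.2 ?_
                rw [← h', negLit_negLit]
                exact hm'
              · exact hg.1 m hm' h'
          have : ∃ C, Der F w C ∧ C ⊆ negs (insert l α) := by
            by_contra hno
            push_neg at hno
            exact hgood ⟨hcons, fun C hC => hno C hC⟩
          obtain ⟨C, hCder, hCsub⟩ := this
          have hnegsins : negs (insert l α) = insert (negLit l) (negs α) := by
            ext m
            simp [Finset.mem_insert, mem_negs]
            constructor
            · rintro (h | h)
              · left; rw [← h]; simp
              · right; exact h
            · rintro (rfl | h)
              · left; simp
              · right; exact h
          have hnlC : negLit l ∈ C := by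
            by_contra hnlC
            refine hg.2 C hCder (fun m hm => ?_)
            have := hCsub hm
            rw [hnegsins] at this
            rcases Finset.mem_insert.1 this with rfl | h
            · exact absurd hm hnlC
            · exact h
          set A₁ : Clause X := A.erase l ∪ C.erase (negLit l) with hA₁
          have hres : IsResolvent A₁ A C := by
            refine ⟨l.1, l.2, by simpa using hlA, ?_, ?_⟩
            · have : negLit l = (l.1, !l.2) := rfl
              rw [← this]; exact hnlC
            · have : negLit l = (l.1, !l.2) := rfl
              rw [hA₁, ← this]
          have hCsub' : C.erase (negLit l) ⊆ negs α := by
            intro m hm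
            have hmC := Finset.mem_erase.1 hm
            have := hCsub hmC.2
            rw [hnegsins] at this
            rcases Finset.mem_insert.1 this with h | h
            · exact absurd h hmC.1
            · exact h
          have hA₁sub : A₁ ⊆ ((A \ negs α).erase l) ∪ negs α := by
            intro m hm
            rcases Finset.mem_union.1 hm with h | h
            · have hm' := Finset.mem_erase.1 h
              by_cases hmn : m ∈ negs α
              · exact Finset.mem_union.2 (Or.inr hmn)
              · exact Finset.mem_union.2 (Or.inl (Finset.mem_erase.2
                  ⟨hm'.1, Finset.mem_sdiff.2 ⟨hm'.2, hmn⟩⟩))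
            · exact Finset.mem_union.2 (Or.inr (hCsub' h))
          have hA₁card : A₁.card ≤ w := by
            have h1 : ((A \ negs α).erase l).card ≤ n := by
              have := Finset.card_erase_of_mem hl
              omega
            calc A₁.card ≤ (((A \ negs α).erase l) ∪ negs α).card :=
                  Finset.card_le_card hA₁sub
              _ ≤ ((A \ negs α).erase l).card + (negs α).card :=
                  Finset.card_union_le _ _
              _ ≤ n + α.card := by rw [negs_card]; omega
              _ ≤ w := by omega
          have hA₁der : Der F w A₁ := Der.res hA hCder hres hA₁card
          have hA₁n : (A₁ \ negs α).card ≤ n := by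
            have : A₁ \ negs α ⊆ (A \ negs α).erase l := by
              intro m hm
              have hm' := Finset.mem_sdiff.1 hm
              have := hA₁sub hm'.1
              rcases Finset.mem_union.1 this with h | h
              · exact h
              · exact absurd h hm'.2
            calc (A₁ \ negs α).card ≤ ((A \ negs α).erase l).card :=
                  Finset.card_le_card this
              _ ≤ n := by have := Finset.card_erase_of_mem hl; omega
          obtain ⟨α', hsub, hg', hcard', l', hl'A₁, hl'α'⟩ :=
            ih A₁ hA₁der hA₁n (by omega)
          refine ⟨α', hsub, hg', hcard', l', ?_, hl'α'⟩
          rcases Finset.mem_union.1 hl'A₁ with h | h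
          · exact (Finset.mem_erase.1 h).2
          · exfalso
            have hmn : l' ∈ negs α := hCsub' h
            have : negLit l' ∈ α := mem_negs.1 hmn
            exact hg'.1 l' hl'α' (hsub this)

/-- Satisfying an axiom of a `k`-CNF by extending a good assignment. -/
lemma satisfy_axiom {F : Finset (Clause X)} {w k : ℕ}
    (hk : ∀ C ∈ F, C.card ≤ k) (hkw : k ≤ w) {α : Finset (Lit X)}
    (hg : Good (↑F : Set (Clause X)) w α) {P : Clause X} (hPF : P ∈ F)
    (hb : k + α.card ≤ w + 1) :
    ∃ α', α ⊆ α' ∧ Good (↑F : Set (Clause X)) w α' ∧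
      α'.card ≤ α.card + 1 ∧ SatP α' P := by
  apply clause_ext α hg k P
    (Der.ax (Finset.mem_coe.2 hPF) ((hk P hPF).trans hkw))
  · exact le_trans (Finset.card_le_card Finset.sdiff_subset) (hk P hPF)
  · exact hb

/-- A width-`w` derivation fragment from configuration `𝒞` to `𝒟`. -/
def Frag (F : Set (Clause X)) (w : ℕ) (𝒞 𝒟 : Config X) : Prop :=
  ∃ (n : ℕ) (f : ℕ → Config X), f 0 = 𝒞 ∧ f n = 𝒟 ∧
    (∀ t < n, ResStep F (f t) (f (t + 1))) ∧
    (∀ t ≤ n, ∀ D ∈ f t, D.card ≤ w) ∧ 𝒞 ⊆ 𝒟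

lemma Frag.trans {F : Set (Clause X)} {w : ℕ} {𝒞 𝒟 ℰ : Config X}
    (h1 : Frag F w 𝒞 𝒟) (h2 : Frag F w 𝒟 ℰ) : Frag F w 𝒞 ℰ := by
  obtain ⟨n1, f1, hf10, hf1n, hstep1, hwid1, hsub1⟩ := h1
  obtain ⟨n2, f2, hf20, hf2n, hstep2, hwid2, hsub2⟩ := h2
  refine ⟨n1 + n2, fun t => if t ≤ n1 then f1 t else f2 (t - n1), by simp [hf10], ?_, ?_, ?_,
    hsub1.trans hsub2⟩
  · by_cases h : n2 = 0
    · subst h; simp [hf1n, ← hf2n, ← hf20]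
    · have : ¬ (n1 + n2 ≤ n1) := by omega
      simp [this, hf2n]
  · intro t ht
    by_cases h : t + 1 ≤ n1
    · have h' : t ≤ n1 := by omega
      simp only [h, h', if_true]
      exact hstep1 t (by omega)
    · by_cases h' : t ≤ n1
      · have : t = n1 := by omega
        subst this
        simp only [h, h', if_true, if_false]
        have : f2 (t + 1 - t) = f2 1 := by congr 1; omega
        rw [this, hf1n, ← hf20]
        exact hstep2 0 (by omega)
      · simp only [h, h', if_false]
        have e1 : t + 1 - n1 = (t - n1) + 1 := by omega
        rw [e1]
        exact hstep2 (t - n1) (by omega)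
  · intro t ht
    by_cases h : t ≤ n1
    · simp only [h, if_true]; exact hwid1 t h
    · simp only [h, if_false]; exact hwid2 (t - n1) (by omega)

lemma Frag.single {F : Set (Clause X)} {w : ℕ} {𝒞 𝒟 : Config X}
    (hstep : ResStep F 𝒞 𝒟) (h𝒞 : ∀ D ∈ 𝒞, D.card ≤ w) (h𝒟 : ∀ D ∈ 𝒟, D.card ≤ w)
    (hsub : 𝒞 ⊆ 𝒟) : Frag F w 𝒞 𝒟 := by
  refine ⟨1, fun t => if t = 0 then 𝒞 else 𝒟, by simp, by simp, ?_, ?_, hsub⟩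
  · intro t ht
    have : t = 0 := by omega
    subst this
    simpa using hstep
  · intro t _
    by_cases h : t = 0 <;> simp [h] <;> [exact h𝒞; exact h𝒟]

lemma der_frag {F : Finset (Clause X)} {w : ℕ} {C : Clause X}
    (h : Der (↑F : Set (Clause X)) w C) :
    ∀ 𝒞 : Config X, (∀ D ∈ 𝒞, D.card ≤ w) →
      ∃ 𝒟, Frag (↑F : Set (Clause X)) w 𝒞 𝒟 ∧ C ∈ 𝒟 ∧ (∀ D ∈ 𝒟, D.card ≤ w) := by
  induction h with
  | ax hA hw =>
    rename_i A
    intro 𝒞 h𝒞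
    have hins : ∀ D ∈ insert A 𝒞, D.card ≤ w := by
      intro D hD
      rcases Finset.mem_insert.1 hD with rfl | hD'
      · exact hw
      · exact h𝒞 D hD'
    exact ⟨insert A 𝒞, Frag.single (ResStep.download 𝒞 A hA) h𝒞 hins
      (Finset.subset_insert _ _), Finset.mem_insert_self _ _, hins⟩
  | res hC hD hres hw ihC ihD =>
    rename_i E C' D'
    intro 𝒞 h𝒞
    obtain ⟨𝒟₁, hfrag1, hC1, hwid1⟩ := ihC 𝒞 h𝒞
    obtain ⟨𝒟₂, hfrag2, hD2, hwid2⟩ := ihD 𝒟₁ hwid1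
    have hC2 : C' ∈ 𝒟₂ := by
      obtain ⟨_, _, _, _, _, _, hsub⟩ := hfrag2
      exact hsub hC1
    have hins : ∀ D ∈ insert E 𝒟₂, D.card ≤ w := by
      intro D hD
      rcases Finset.mem_insert.1 hD with rfl | hD'
      · exact hw
      · exact hwid2 D hD'
    refine ⟨insert E 𝒟₂, (hfrag1.trans hfrag2).trans ?_, Finset.mem_insert_self _ _, hins⟩
    exact Frag.single (ResStep.infer 𝒟₂ E C' D' hC2 hD2 hres) hwid2 hins
      (Finset.subset_insert _ _)

/-- From a derivation of the empty clause, a refutation of width `w`. -/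
lemma der_refutation {F : Finset (Clause X)} {w : ℕ}
    (h : Der (↑F : Set (Clause X)) w (∅ : Clause X)) :
    ∃ π' : ResRefutation (↑F : Set (Clause X)), π'.widthLE w := by
  obtain ⟨𝒟, ⟨n, f, hf0, hfn, hstep, hwid, _⟩, hmem, _⟩ :=
    der_frag h (∅ : Config X) (by simp)
  exact ⟨⟨n, f, hf0, hfn ▸ hmem, hstep⟩, fun t ht D hD => hwid t ht D hD⟩

lemma step_cases {F : Set (Clause X)} {𝒞 𝒟 : Config X} (h : ResStep F 𝒞 𝒟) :
    (∃ A, A ∈ F ∧ 𝒟 = insert A 𝒞) ∨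
    (∃ E C D, C ∈ 𝒞 ∧ D ∈ 𝒞 ∧ IsResolvent E C D ∧ 𝒟 = insert E 𝒞) ∨
    (∃ E C, C ∈ 𝒞 ∧ C ⊆ E ∧ 𝒟 = insert E 𝒞) ∨
    (∃ C, C ∈ 𝒞 ∧ 𝒟 = 𝒞.erase C) := by
  cases h with
  | download A hA => exact Or.inl ⟨A, hA, rfl⟩
  | infer E C D hC hD hres => exact Or.inr (Or.inl ⟨E, C, D, hC, hD, hres, rfl⟩)
  | weaken E C hC hsub => exact Or.inr (Or.inr (Or.inl ⟨E, C, hC, hsub, rfl⟩))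
  | erase C hC => exact Or.inr (Or.inr (Or.inr ⟨C, hC, rfl⟩))

/-- Any refutation of a formula without the empty clause has space at least 3. -/
lemma space_ge_three {F : Finset (Clause X)} (hne : (∅ : Clause X) ∉ F)
    (π : ResRefutation (↑F : Set (Clause X))) {s : ℕ} (hs : π.spaceLE s) : 3 ≤ s := by
  classical
  have hex : ∃ t, t ≤ π.len ∧ (∅ : Clause X) ∈ π.conf t := ⟨π.len, le_rfl, π.final⟩
  obtain ⟨ht₀len, ht₀mem⟩ := Nat.find_spec hex
  have ht₀pos : Nat.find hex ≠ 0 := by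
    intro h0
    rw [h0, π.init] at ht₀mem
    exact Finset.notMem_empty _ ht₀mem
  obtain ⟨t, hteq⟩ : ∃ t, Nat.find hex = t + 1 := ⟨Nat.find hex - 1, by omega⟩
  rw [hteq] at ht₀len ht₀mem
  have htlt : t < π.len := by omega
  have hnot : (∅ : Clause X) ∉ π.conf t := by
    intro hmem
    exact Nat.find_min hex (by omega : t < Nat.find hex) ⟨by omega, hmem⟩
  rcases step_cases (π.step t htlt) with ⟨A, hA, hEq⟩ | ⟨E, C, D, hC, hD, hres, hEq⟩ |
    ⟨E, C, hC, hsub, hEq⟩ | ⟨C, hC, hEq⟩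
  · exfalso
    rw [hEq] at ht₀mem
    rcases Finset.mem_insert.1 ht₀mem with h | h
    · exact hne (by rwa [← h] at hA)
    · exact hnot h
  · rw [hEq] at ht₀mem
    rcases Finset.mem_insert.1 ht₀mem with h | h
    · obtain ⟨v, b, hvC, hvD, hresEq⟩ := hres
      rw [← h] at hresEq
      have hCe : C.erase (v, b) = ∅ := (Finset.union_eq_empty.1 hresEq.symm).1
      have hDe : D.erase (v, !b) = ∅ := (Finset.union_eq_empty.1 hresEq.symm).2
      have hCeq : C = {(v, b)} := by
        rcases (Finset.erase_eq_empty_iff C (v, b)).1 hCe with h' | h'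
        · exact absurd (h' ▸ hvC) (Finset.notMem_empty _)
        · exact h'
      have hDeq : D = {(v, !b)} := by
        rcases (Finset.erase_eq_empty_iff D (v, !b)).1 hDe with h' | h'
        · exact absurd (h' ▸ hvD) (Finset.notMem_empty _)
        · exact h'
      have hsub3 : ({∅, {(v, b)}, {(v, !b)}} : Config X) ⊆ π.conf (t + 1) := by
        rw [hEq]
        intro Z hZ
        simp only [Finset.mem_insert, Finset.mem_singleton] at hZ
        rcases hZ with rfl | rfl | rfl
        · rw [← h]; exact Finset.mem_insert_self _ _
        · exact Finset.mem_insert_of_mem (hCeq ▸ hC)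
        · exact Finset.mem_insert_of_mem (hDeq ▸ hD)
      have hcard3 : ({∅, {(v, b)}, {(v, !b)}} : Config X).card = 3 := by
        rw [Finset.card_insert_of_notMem, Finset.card_insert_of_notMem]
        · simp
        · simp only [Finset.mem_singleton]
          intro hcontra
          have : ((v, b) : Lit X) ∈ ({(v, !b)} : Clause X) :=
            hcontra ▸ Finset.mem_singleton_self _
          simp at this
        · simp only [Finset.mem_insert, Finset.mem_singleton]
          push_neg
          constructor
          · intro hcontra
            have : ((v, b) : Lit X) ∈ (∅ : Clause X) :=
              hcontra ▸ Finset.mem_singleton_self _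
            simp at this
          · intro hcontra
            have : ((v, !b) : Lit X) ∈ (∅ : Clause X) :=
              hcontra ▸ Finset.mem_singleton_self _
            simp at this
      have := Finset.card_le_card hsub3
      have := hs (t + 1) ht₀len
      omega
    · exact absurd h hnot
  · exfalso
    rw [hEq] at ht₀mem
    rcases Finset.mem_insert.1 ht₀mem with h | h
    · have : C = ∅ := Finset.subset_empty.1 (h ▸ hsub)
      exact hnot (this ▸ hC)
    · exact hnot h
  · exfalso
    rw [hEq] at ht₀mem
    exact hnot (Finset.mem_of_mem_erase ht₀mem)

end SUBW

/-- if an unsatisfiable `k`-CNF formula `F` (not containing the empty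
clause) has a resolution refutation in clause space `s`, then it has a resolution
refutation of width at most `s + k - 3`. -/
theorem space_upper_bounds_width {X : Type} [DecidableEq X] (F : Finset (Clause X))
    (k s : ℕ) (hk : ∀ C ∈ F, C.card ≤ k) (hne : (∅ : Clause X) ∉ F)
    (π : ResRefutation (F : Set (Clause X))) (hs : π.spaceLE s) :
    ∃ π' : ResRefutation (F : Set (Clause X)), π'.widthLE (s + k - 3) := by
  classical
  have hs3 : 3 ≤ s := SUBW.space_ge_three hne π hs
  set w := s + k - 3 with hwdef
  have hkw : k ≤ w := by omega
  by_cases hder : SUBW.Der (↑F : Set (Clause X)) w (∅ : Clause X)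
  · exact SUBW.der_refutation hder
  · exfalso
    have key : ∀ t, t ≤ π.len →
        ∃ α : Finset (Lit X), SUBW.Good (↑F : Set (Clause X)) w α ∧
          (∀ C ∈ π.conf t, C ∉ F → SUBW.SatP α C) ∧
          α.card ≤ ((π.conf t).filter (fun C => C ∉ F)).card := by
      intro t
      induction t with
      | zero =>
        intro _
        refine ⟨∅, SUBW.Good.empty hder, ?_, ?_⟩
        · intro C hC
          rw [π.init] at hC
          exact absurd hC (Finset.notMem_empty _)
        · simp
      | succ t ih =>
        intro hlen
        have htlt : t < π.len := hlen
        obtain ⟨α, hg, hsat, hcard⟩ := ih (le_of_lt htlt)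
        -- any unsatisfied clause in the current configuration is an axiom
        have hunsat_ax : ∀ P ∈ π.conf t, ¬ SUBW.SatP α P → P ∈ F := by
          intro P hP hPs
          by_contra hPF
          exact hPs (hsat P hP hPF)
        -- the filter set is contained in the configuration minus any axiom
        have hNsub : ∀ P ∈ π.conf t, P ∈ F →
            (π.conf t).filter (fun C => C ∉ F) ⊆ (π.conf t).erase P := by
          intro P _ hPF Q hQ
          have hQ' := Finset.mem_filter.1 hQ
          refine Finset.mem_erase.2 ⟨?_, hQ'.1⟩
          intro h
          exact hQ'.2 (h ▸ hPF)
        rcases SUBW.step_cases (π.step t htlt) with ⟨A, hA, hEq⟩ |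
          ⟨E, C, D, hC, hD, hres, hEq⟩ | ⟨E, C, hC, hsub, hEq⟩ | ⟨C, hC, hEq⟩
        · -- download
          have hAF : A ∈ F := Finset.mem_coe.1 hA
          refine ⟨α, hg, ?_, ?_⟩
          · intro C hC hCF
            rw [hEq] at hC
            rcases Finset.mem_insert.1 hC with rfl | h
            · exact absurd hAF hCF
            · exact hsat C h hCF
          · rw [hEq, Finset.filter_insert, if_neg (by simpa using hAF)]
            exact hcard
        · -- inference
          by_cases hE : E ∈ π.conf t
          · rw [hEq, Finset.insert_eq_self.2 hE]
            exact ⟨α, hg, hsat, hcard⟩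
          · have hspace : (π.conf t).card + 1 ≤ s := by
              have := hs (t + 1) hlen
              rwa [hEq, Finset.card_insert_of_notMem hE] at this
            by_cases hEF : E ∈ F
            · refine ⟨α, hg, ?_, ?_⟩
              · intro C' hC' hC'F
                rw [hEq] at hC'
                rcases Finset.mem_insert.1 hC' with rfl | h
                · exact absurd hEF hC'F
                · exact hsat C' h hC'F
              · rw [hEq, Finset.filter_insert, if_neg (by simpa using hEF)]
                exact hcard
            · -- E is a genuinely new non-axiom clause
              have hboth : ∃ α₂, α ⊆ α₂ ∧ SUBW.Good (↑F : Set (Clause X)) w α₂ ∧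
                  SUBW.SatP α₂ C ∧ SUBW.SatP α₂ D := by
                by_cases hCsat : SUBW.SatP α C
                · by_cases hDsat : SUBW.SatP α D
                  · exact ⟨α, Finset.Subset.refl _, hg, hCsat, hDsat⟩
                  · have hDF : D ∈ F := hunsat_ax D hD hDsat
                    have hNle : ((π.conf t).filter (fun C => C ∉ F)).card + 1 ≤
                        (π.conf t).card := by
                      have h1 := Finset.card_le_card (hNsub D hD hDF)
                      have h2 := Finset.card_erase_of_mem hD
                      have h3 := Finset.card_pos.2 ⟨D, hD⟩
                      omega
                    obtain ⟨α', hsub', hg', _, hsatD⟩ := SUBW.satisfy_axiom hk hkw hg hDF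
                      (by omega)
                    exact ⟨α', hsub', hg', hCsat.mono hsub', hsatD⟩
                · have hCF : C ∈ F := hunsat_ax C hC hCsat
                  have hNleC : ((π.conf t).filter (fun C => C ∉ F)).card + 1 ≤
                      (π.conf t).card := by
                    have h1 := Finset.card_le_card (hNsub C hC hCF)
                    have h2 := Finset.card_erase_of_mem hC
                    have h3 := Finset.card_pos.2 ⟨C, hC⟩
                    omega
                  by_cases hDsat : SUBW.SatP α D
                  · obtain ⟨α', hsub', hg', _, hsatC⟩ := SUBW.satisfy_axiom hk hkw hg hCF
                      (by omega)
                    exact ⟨α', hsub', hg', hsatC, hDsat.mono hsub'⟩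
                  · have hDF : D ∈ F := hunsat_ax D hD hDsat
                    by_cases hCD : C = D
                    · obtain ⟨α', hsub', hg', _, hsatC⟩ := SUBW.satisfy_axiom hk hkw hg hCF
                        (by omega)
                      exact ⟨α', hsub', hg', hsatC, hCD ▸ hsatC⟩
                    · have hNle2 : ((π.conf t).filter (fun C => C ∉ F)).card + 2 ≤
                          (π.conf t).card := by
                        have hsub2 : (π.conf t).filter (fun C => C ∉ F) ⊆
                            ((π.conf t).erase C).erase D := by
                          intro Q hQ
                          have hQ' := Finset.mem_filter.1 hQ
                          refine Finset.mem_erase.2 ⟨?_, Finset.mem_erase.2 ⟨?_, hQ'.1⟩⟩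
                          · intro h; exact hQ'.2 (h ▸ hDF)
                          · intro h; exact hQ'.2 (h ▸ hCF)
                        have h1 := Finset.card_le_card hsub2
                        have hDmem : D ∈ (π.conf t).erase C :=
                          Finset.mem_erase.2 ⟨fun h => hCD h.symm, hD⟩
                        have h2 := Finset.card_erase_of_mem hDmem
                        have h3 := Finset.card_erase_of_mem hC
                        have h4 := Finset.card_pos.2 ⟨C, hC⟩
                        have h5 := Finset.card_pos.2 ⟨D, hDmem⟩
                        omega
                      obtain ⟨α₁, hsub1, hg1, hcard1, hsatC⟩ := SUBW.satisfy_axiom hk hkw hg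
                        hCF (by omega)
                      obtain ⟨α₂, hsub2, hg2, _, hsatD⟩ := SUBW.satisfy_axiom hk hkw hg1
                        hDF (by omega)
                      exact ⟨α₂, hsub1.trans hsub2, hg2, hsatC.mono hsub2, hsatD⟩
              obtain ⟨α₂, hsub2, hg2, hsatC, hsatD⟩ := hboth
              have hsatE : SUBW.SatP α₂ E := SUBW.resolvent_sat hg2.1 hsatC hsatD hres
              have hsatN : ∀ C' ∈ insert E ((π.conf t).filter (fun C => C ∉ F)),
                  SUBW.SatP α₂ C' := by
                intro C' hC'
                rcases Finset.mem_insert.1 hC' with rfl | h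
                · exact hsatE
                · have h' := Finset.mem_filter.1 h
                  exact (hsat C' h'.1 h'.2).mono hsub2
              obtain ⟨β, _, hgβ, hβsat, hβcard⟩ := SUBW.shrink hg2 hsatN
              refine ⟨β, hgβ, ?_, ?_⟩
              · intro C' hC' hC'F
                rw [hEq] at hC'
                rcases Finset.mem_insert.1 hC' with rfl | h
                · exact hβsat C' (Finset.mem_insert_self _ _)
                · exact hβsat C' (Finset.mem_insert_of_mem
                    (Finset.mem_filter.2 ⟨h, hC'F⟩))
              · rw [hEq, Finset.filter_insert, if_pos (by simpa using hEF)]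
                exact hβcard
        · -- weakening
          by_cases hE : E ∈ π.conf t
          · rw [hEq, Finset.insert_eq_self.2 hE]
            exact ⟨α, hg, hsat, hcard⟩
          · have hspace : (π.conf t).card + 1 ≤ s := by
              have := hs (t + 1) hlen
              rwa [hEq, Finset.card_insert_of_notMem hE] at this
            by_cases hEF : E ∈ F
            · refine ⟨α, hg, ?_, ?_⟩
              · intro C' hC' hC'F
                rw [hEq] at hC'
                rcases Finset.mem_insert.1 hC' with rfl | h
                · exact absurd hEF hC'F
                · exact hsat C' h hC'F
              · rw [hEq, Finset.filter_insert, if_neg (by simpa using hEF)]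
                exact hcard
            · have hα' : ∃ α', α ⊆ α' ∧ SUBW.Good (↑F : Set (Clause X)) w α' ∧
                  α'.card ≤ ((π.conf t).filter (fun C => C ∉ F)).card + 1 ∧
                  SUBW.SatP α' C := by
                by_cases hCsat : SUBW.SatP α C
                · exact ⟨α, Finset.Subset.refl _, hg, by omega, hCsat⟩
                · have hCF : C ∈ F := hunsat_ax C hC hCsat
                  have hNleC : ((π.conf t).filter (fun C => C ∉ F)).card + 1 ≤
                      (π.conf t).card := by
                    have h1 := Finset.card_le_card (hNsub C hC hCF)
                    have h2 := Finset.card_erase_of_mem hC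
                    have h3 := Finset.card_pos.2 ⟨C, hC⟩
                    omega
                  obtain ⟨α', hsub', hg', hcard', hsatC⟩ := SUBW.satisfy_axiom hk hkw hg
                    hCF (by omega)
                  exact ⟨α', hsub', hg', by omega, hsatC⟩
              obtain ⟨α', hsub', hg', hcard', hsatC⟩ := hα'
              have hsatE : SUBW.SatP α' E := by
                obtain ⟨l, hl, hlα⟩ := hsatC
                exact ⟨l, hsub hl, hlα⟩
              refine ⟨α', hg', ?_, ?_⟩
              · intro C' hC' hC'F
                rw [hEq] at hC'
                rcases Finset.mem_insert.1 hC' with rfl | h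
                · exact hsatE
                · exact (hsat C' h hC'F).mono hsub'
              · rw [hEq, Finset.filter_insert, if_pos (by simpa using hEF),
                  Finset.card_insert_of_notMem]
                · exact hcard'
                · intro hcontra
                  exact hE (Finset.mem_filter.1 hcontra).1
        · -- erasure
          have hsatN : ∀ C' ∈ ((π.conf t).erase C).filter (fun C => C ∉ F),
              SUBW.SatP α C' := by
            intro C' hC'
            have h' := Finset.mem_filter.1 hC'
            exact hsat C' (Finset.mem_of_mem_erase h'.1) h'.2
          obtain ⟨β, _, hgβ, hβsat, hβcard⟩ := SUBW.shrink hg hsatN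
          refine ⟨β, hgβ, ?_, ?_⟩
          · intro C' hC' hC'F
            rw [hEq] at hC'
            exact hβsat C' (Finset.mem_filter.2 ⟨hC', hC'F⟩)
          · rw [hEq]
            exact hβcard
    obtain ⟨α, _, hsatfin, _⟩ := key π.len le_rfl
    obtain ⟨l, hl, _⟩ := hsatfin ∅ π.final hne
    exact Finset.notMem_empty l hl
end

section
/- Let F be an unsatisfiable k-CNF formula with an r-DNF resolution refutation in space at most s. Then F has a (standard) resolution refutation of width at most (s − 2)·r + k − 1. -/
/-- A DNF formula: a finite set of terms, interpreted disjunctively. -/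
abbrev DNF (X : Type) := Finset (Finset (Lit X))

/-- An `r`-DNF formula: all its terms have at most `r` literals. -/
def IsRDNF {X : Type} (r : ℕ) (G : DNF X) : Prop := ∀ T ∈ G, T.card ≤ r

/-- The `1`-DNF formula corresponding to a clause. -/
def clauseToDNF {X : Type} [DecidableEq X] (C : Clause X) : DNF X :=
  C.image (fun l => ({l} : Finset (Lit X)))

/-- A single step of an `r`-DNF resolution (Res(r)) derivation from the CNF
formula `F`: axiom download, `r`-cut, ∧-introduction, ∧-elimination, weakening,
or erasure. -/
inductive RDNFStep {X : Type} [DecidableEq X] (r : ℕ) (F : Set (Clause X)) :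
    Finset (DNF X) → Finset (DNF X) → Prop
  | download (𝒞 : Finset (DNF X)) (A : Clause X) (hA : A ∈ F) :
      RDNFStep r F 𝒞 (insert (clauseToDNF A) 𝒞)
  | cut (𝒞 : Finset (DNF X)) (T : Finset (Lit X)) (G H : DNF X)
      (hTne : T.Nonempty) (hTr : T.card ≤ r)
      (h1 : insert T G ∈ 𝒞)
      (h2 : (T.image fun l => ({negLit l} : Finset (Lit X))) ∪ H ∈ 𝒞) :
      RDNFStep r F 𝒞 (insert (G ∪ H) 𝒞)
  | andIntro (𝒞 : Finset (DNF X)) (T T' : Finset (Lit X)) (G : DNF X)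
      (hr : (T ∪ T').card ≤ r) (h1 : insert T G ∈ 𝒞) (h2 : insert T' G ∈ 𝒞) :
      RDNFStep r F 𝒞 (insert (insert (T ∪ T') G) 𝒞)
  | andElim (𝒞 : Finset (DNF X)) (T T' : Finset (Lit X)) (G : DNF X)
      (h1 : insert T G ∈ 𝒞) (hsub : T' ⊆ T) (hne : T'.Nonempty) :
      RDNFStep r F 𝒞 (insert (insert T' G) 𝒞)
  | weaken (𝒞 : Finset (DNF X)) (G H : DNF X) (hG : G ∈ 𝒞) (hH : IsRDNF r H) :
      RDNFStep r F 𝒞 (insert (G ∪ H) 𝒞)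
  | erase (𝒞 : Finset (DNF X)) (G : DNF X) (hG : G ∈ 𝒞) :
      RDNFStep r F 𝒞 (𝒞.erase G)

/-- An `r`-DNF resolution refutation of the CNF formula `F`. -/
structure RDNFRefutation {X : Type} [DecidableEq X] (r : ℕ) (F : Set (Clause X)) where
  len : ℕ
  conf : ℕ → Finset (DNF X)
  init : conf 0 = ∅
  final : (∅ : DNF X) ∈ conf len
  step : ∀ t < len, RDNFStep r F (conf t) (conf (t + 1))

/-- The `r`-DNF refutation has space (number of `r`-DNF formulas in memory) at most `s`. -/
def RDNFRefutation.spaceLE {X : Type} [DecidableEq X] {r : ℕ} {F : Set (Clause X)}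
    (π : RDNFRefutation r F) (s : ℕ) : Prop :=
  ∀ t ≤ π.len, (π.conf t).card ≤ s

namespace RdnfAux

variable {X : Type} [DecidableEq X]

/-- A partial assignment (viewed as a set of literals) falsifies a clause. -/
def Falsified (α : Finset (Lit X)) (C : Clause X) : Prop := ∀ l ∈ C, negLit l ∈ α

/-- A set of literals is consistent. -/
def Cons (α : Finset (Lit X)) : Prop := ∀ v : X, ¬((v, true) ∈ α ∧ (v, false) ∈ α)

/-- Clauses derivable from `F` by resolution keeping width at most `w`. -/
inductive WDeriv (F : Set (Clause X)) (w : ℕ) : Clause X → Prop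
  | ax {C} (h : C ∈ F) : WDeriv F w C
  | res {E C D} (hC : WDeriv F w C) (hD : WDeriv F w D) (h : IsResolvent E C D)
      (hw : E.card ≤ w) : WDeriv F w E

/-- A good partial assignment: consistent and falsifying no width-`w` derivable clause. -/
def Good (F : Set (Clause X)) (w : ℕ) (α : Finset (Lit X)) : Prop :=
  Cons α ∧ ∀ C, WDeriv F w C → ¬ Falsified α C

lemma negLit_negLit (l : Lit X) : negLit (negLit l) = l := by
  cases l with | mk v b => simp [negLit]

lemma Good.subset {F : Set (Clause X)} {w : ℕ} {α β : Finset (Lit X)}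
    (h : Good F w α) (hsub : β ⊆ α) : Good F w β := by
  refine ⟨fun v hv => h.1 v ⟨hsub hv.1, hsub hv.2⟩, fun C hC hf => h.2 C hC ?_⟩
  exact fun l hl => hsub (hf l hl)

lemma good_empty {F : Set (Clause X)} {w : ℕ} (h : ¬ WDeriv F w (∅ : Clause X)) :
    Good F w (∅ : Finset (Lit X)) := by
  refine ⟨fun v hv => by simp at hv, fun C hC hf => ?_⟩
  have : C = ∅ := Finset.eq_empty_iff_forall_notMem.2 fun l hl => by
    simpa using hf l hl
  exact h (this ▸ hC)

lemma extend_one {F : Set (Clause X)} {w : ℕ} {β : Finset (Lit X)} (hβ : Good F w β)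
    (hcard : β.card ≤ w) (x : X) : ∃ b, Good F w (insert (x, b) β) := by
  by_cases hx : ∃ b0 : Bool, (x, b0) ∈ β
  · obtain ⟨b0, hb0⟩ := hx
    exact ⟨b0, by rwa [Finset.insert_eq_self.mpr hb0]⟩
  push_neg at hx
  by_contra hcon
  push_neg at hcon
  have hconsb : ∀ b : Bool, Cons (insert (x, b) β) := by
    intro b v hv
    rcases hv with ⟨h1, h2⟩
    rcases Finset.mem_insert.1 h1 with h1 | h1 <;> rcases Finset.mem_insert.1 h2 with h2 | h2
    · exact absurd (congrArg Prod.snd (h1.trans h2.symm)) (by simp)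
    · have hvx : v = x := congrArg Prod.fst h1
      exact hx false (hvx ▸ h2)
    · have hvx : v = x := congrArg Prod.fst h2
      exact hx true (hvx ▸ h1)
    · exact hβ.1 v ⟨h1, h2⟩
  have hfals : ∀ b : Bool, ∃ C, WDeriv F w C ∧ Falsified (insert (x, b) β) C := by
    intro b
    have := hcon b
    rw [Good, not_and] at this
    have h2 := this (hconsb b)
    push_neg at h2
    exact h2
  obtain ⟨C, hCw, hCf⟩ := hfals false
  obtain ⟨D, hDw, hDf⟩ := hfals true
  -- `C` must contain (x, true), `D` must contain (x, false)
  have hCx : (x, true) ∈ C := by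
    by_contra h
    refine hβ.2 C hCw fun l hl => ?_
    rcases Finset.mem_insert.1 (hCf l hl) with he | hm
    · exact absurd (by rw [← negLit_negLit l, he]; rfl : l = (x, true)) (fun hh => h (hh ▸ hl))
    · exact hm
  have hDx : (x, false) ∈ D := by
    by_contra h
    refine hβ.2 D hDw fun l hl => ?_
    rcases Finset.mem_insert.1 (hDf l hl) with he | hm
    · exact absurd (by rw [← negLit_negLit l, he]; rfl : l = (x, false)) (fun hh => h (hh ▸ hl))
    · exact hm
  set E : Clause X := C.erase (x, true) ∪ D.erase (x, false) with hE
  have hEf : Falsified β E := by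
    intro m hm
    rcases Finset.mem_union.1 hm with hm | hm
    · obtain ⟨hne, hmC⟩ := Finset.mem_erase.1 hm
      rcases Finset.mem_insert.1 (hCf m hmC) with he | h
      · exact absurd (by rw [← negLit_negLit m, he]; rfl : m = (x, true)) hne
      · exact h
    · obtain ⟨hne, hmD⟩ := Finset.mem_erase.1 hm
      rcases Finset.mem_insert.1 (hDf m hmD) with he | h
      · exact absurd (by rw [← negLit_negLit m, he]; rfl : m = (x, false)) hne
      · exact h
  have hEsub : E ⊆ β.image negLit := by
    intro m hm
    exact Finset.mem_image.2 ⟨negLit m, hEf m hm, negLit_negLit m⟩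
  have hEcard : E.card ≤ w :=
    le_trans (Finset.card_le_card hEsub) (le_trans (Finset.card_image_le) hcard)
  have hres : IsResolvent E C D := ⟨x, true, hCx, by simpa using hDx, rfl⟩
  exact hβ.2 E (WDeriv.res hCw hDw hres hEcard) hEf

lemma extend_finset {F : Set (Clause X)} {w : ℕ} (L : Finset (Lit X)) :
    ∀ β : Finset (Lit X), Good F w β → β.card + L.card ≤ w + 1 →
    ∃ β', β ⊆ β' ∧ Good F w β' ∧ β'.card ≤ β.card + L.card ∧
      ∀ l ∈ L, ∃ b, (l.1, b) ∈ β' := by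
  classical
  induction L using Finset.induction_on with
  | empty => intro β h _; exact ⟨β, subset_rfl, h, by simp, by simp⟩
  | @insert l L hl ih =>
    intro β hβ hcard
    rw [Finset.card_insert_of_notMem hl] at hcard
    obtain ⟨β', hsub, hβ', hc', hall⟩ := ih β hβ (by omega)
    obtain ⟨b, hb⟩ := extend_one hβ' (by omega) l.1
    refine ⟨insert (l.1, b) β', hsub.trans (Finset.subset_insert _ _), hb, ?_, ?_⟩
    · calc (insert (l.1, b) β').card ≤ β'.card + 1 := Finset.card_insert_le _ _
        _ ≤ β.card + (insert l L).card := by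
            rw [Finset.card_insert_of_notMem hl]; omega
    · intro m hm
      rcases Finset.mem_insert.1 hm with rfl | hm
      · exact ⟨b, Finset.mem_insert_self _ _⟩
      · obtain ⟨c, hc⟩ := hall m hm
        exact ⟨c, Finset.mem_insert_of_mem hc⟩

lemma sat_axiom {F : Set (Clause X)} {w : ℕ} {A : Clause X} (hA : A ∈ F)
    {β : Finset (Lit X)} (hβ : Good F w β)
    (hall : ∀ l ∈ A, ∃ b, (l.1, b) ∈ β) : ∃ l ∈ A, l ∈ β := by
  by_contra h
  push_neg at h
  refine hβ.2 A (WDeriv.ax hA) fun l hl => ?_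
  obtain ⟨b, hb⟩ := hall l hl
  have hne : b ≠ l.2 := by
    intro he
    exact h l hl (by cases l; cases he; exact hb)
  have : b = !l.2 := by cases b <;> cases hl2 : l.2 <;> simp_all
  rw [this] at hb
  exact hb

lemma wd_card {F : Set (Clause X)} {w k : ℕ} (hk : ∀ C ∈ F, Finset.card C ≤ k)
    (hkw : k ≤ w) {C : Clause X} (h : WDeriv F w C) : C.card ≤ w := by
  induction h with
  | ax h => exact le_trans (hk _ h) hkw
  | res _ _ _ hw => exact hw

lemma cons_not_both {α : Finset (Lit X)} (h : Cons α) {l : Lit X}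
    (h1 : l ∈ α) (h2 : negLit l ∈ α) : False := by
  obtain ⟨v, b⟩ := l
  cases b
  · exact h v ⟨by simpa [negLit] using h2, h1⟩
  · exact h v ⟨h1, by simpa [negLit] using h2⟩

lemma pay {F : Set (Clause X)} {w k r s : ℕ} (hk : ∀ C ∈ F, Finset.card C ≤ k)
    (hw : w + 1 = (s - 2) * r + k)
    (α : Finset (Lit X)) (S : Finset (DNF X)) (A : Clause X)
    (hα : Good F w α) (hA : A ∈ F) (hScard : S.card + 2 ≤ s)
    (hSr : ∀ G ∈ S, IsRDNF r G) (hSsat : ∀ G ∈ S, ∃ T ∈ G, T ⊆ α) :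
    ∃ α', Good F w α' ∧ (∀ G ∈ S, ∃ T ∈ G, T ⊆ α') ∧ ∃ l ∈ A, l ∈ α' := by
  classical
  have hwit : ∀ G ∈ S, ∃ T, T ∈ G ∧ T ⊆ α ∧ T.card ≤ r := by
    intro G hG
    obtain ⟨T, hT1, hT2⟩ := hSsat G hG
    exact ⟨T, hT1, hT2, hSr G hG T hT1⟩
  choose g hg1 hg2 hg3 using hwit
  set β := S.attach.biUnion (fun G => g G.1 G.2) with hβdef
  have hβsub : β ⊆ α := by
    intro m hm
    obtain ⟨G, _, hmG⟩ := Finset.mem_biUnion.1 hm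
    exact hg2 G.1 G.2 hmG
  have hβcard : β.card ≤ S.card * r := by
    calc β.card ≤ ∑ G ∈ S.attach, (g G.1 G.2).card := Finset.card_biUnion_le
      _ ≤ ∑ _G ∈ S.attach, r := Finset.sum_le_sum (fun G _ => hg3 G.1 G.2)
      _ = S.card * r := by rw [Finset.sum_const, Finset.card_attach, smul_eq_mul]
  have hgood : Good F w β := hα.subset hβsub
  have hbudget : β.card + A.card ≤ w + 1 := by
    have h1 : β.card ≤ (s - 2) * r :=
      le_trans hβcard (Nat.mul_le_mul_right r (by omega))
    have h2 : A.card ≤ k := hk A hA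
    omega
  obtain ⟨β', hsub', hgood', _, hall⟩ := extend_finset A β hgood hbudget
  obtain ⟨l, hlA, hlβ⟩ := sat_axiom hA hgood' (fun m hm => hall m hm)
  refine ⟨β', hgood', ?_, l, hlA, hlβ⟩
  intro G hG
  refine ⟨g G hG, hg1 G hG, fun m hm => hsub' (Finset.mem_biUnion.2 ⟨⟨G, hG⟩, Finset.mem_attach _ _, hm⟩)⟩

lemma build {F : Set (Clause X)} {w : ℕ} {C : Clause X} (hC : WDeriv F w C) :
    ∀ 𝒞₀ : Config X, (∀ D ∈ 𝒞₀, WDeriv F w D) →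
    ∃ (n : ℕ) (f : ℕ → Config X), f 0 = 𝒞₀ ∧ (∀ t < n, ResStep F (f t) (f (t + 1))) ∧
      C ∈ f n ∧ 𝒞₀ ⊆ f n ∧ (∀ t ≤ n, ∀ D ∈ f t, WDeriv F w D) := by
  induction hC with
  | @ax C h =>
    intro 𝒞₀ h0
    refine ⟨1, fun t => if t = 0 then 𝒞₀ else insert C 𝒞₀, rfl, ?_, ?_, ?_, ?_⟩
    · intro t ht
      interval_cases t
      simpa using ResStep.download 𝒞₀ C h
    · simp
    · simpa using Finset.subset_insert _ _
    · intro t _ D hD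
      by_cases ht : t = 0
      · simp only [ht, if_pos rfl] at hD
        exact h0 D hD
      · simp only [if_neg ht] at hD
        rcases Finset.mem_insert.1 hD with rfl | hD
        · exact WDeriv.ax h
        · exact h0 D hD
  | @res E C D hC hD hres hw ihC ihD =>
    intro 𝒞₀ h0
    obtain ⟨n₁, f₁, hf10, hf1s, hf1C, hf1sub, hf1w⟩ := ihC 𝒞₀ h0
    obtain ⟨n₂, f₂, hf20, hf2s, hf2D, hf2sub, hf2w⟩ := ihD (f₁ n₁) (hf1w n₁ le_rfl)
    set g : ℕ → Config X := fun t =>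
      if t ≤ n₁ then f₁ t else if t ≤ n₁ + n₂ then f₂ (t - n₁) else insert E (f₂ n₂) with hg
    have hg2 : ∀ t, n₁ ≤ t → t ≤ n₁ + n₂ → g t = f₂ (t - n₁) := by
      intro t h1 h2
      by_cases h : t ≤ n₁
      · have : t = n₁ := le_antisymm h h1
        simp [hg, this, hf20]
      · simp [hg, h, h2]
    have hCin : C ∈ f₂ n₂ := hf2sub hf1C
    refine ⟨n₁ + n₂ + 1, g, ?_, ?_, ?_, ?_, ?_⟩
    · simp [hg, hf10]
    · intro t ht
      rcases lt_trichotomy t n₁ with h | heq | h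
      · have e1 : g t = f₁ t := by simp [hg, le_of_lt h]
        have e2 : g (t + 1) = f₁ (t + 1) := by simp [hg, show t + 1 ≤ n₁ by omega]
        rw [e1, e2]; exact hf1s t h
      · subst heq
        by_cases hn2 : n₂ = 0
        · have e1 : g t = f₂ 0 := by simpa using hg2 t le_rfl (by omega)
          have e2 : g (t + 1) = insert E (f₂ n₂) := by
            simp [hg, hn2, show ¬ (t + 1 ≤ t) by omega]
          rw [e1, e2, hn2]
          exact ResStep.infer _ E C D (hn2 ▸ hCin) (hn2 ▸ hf2D) hres
        · have e1 : g t = f₂ 0 := by simpa using hg2 t le_rfl (by omega)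
          have e2 : g (t + 1) = f₂ 1 := by simpa using hg2 (t + 1) (by omega) (by omega)
          rw [e1, e2]
          exact hf2s 0 (by omega)
      · rcases lt_or_eq_of_le (by omega : t + 1 ≤ n₁ + n₂ + 1) with h2 | h2
        · have e1 : g t = f₂ (t - n₁) := hg2 t (by omega) (by omega)
          have e2 : g (t + 1) = f₂ (t - n₁ + 1) := by
            rw [hg2 (t + 1) (by omega) (by omega)]
            congr 1
            omega
          rw [e1, e2]
          exact hf2s (t - n₁) (by omega)
        · have e1 : g t = f₂ n₂ := by
            rw [hg2 t (by omega) (by omega)]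
            congr 1
            omega
          have e2 : g (t + 1) = insert E (f₂ n₂) := by
            have : ¬ t + 1 ≤ n₁ := by omega
            simp [hg, this, show ¬ t + 1 ≤ n₁ + n₂ by omega]
          rw [e1, e2]
          exact ResStep.infer _ E C D hCin hf2D hres
    · have : g (n₁ + n₂ + 1) = insert E (f₂ n₂) := by
        simp [hg, show ¬ n₁ + n₂ + 1 ≤ n₁ by omega, show ¬ n₁ + n₂ + 1 ≤ n₁ + n₂ by omega]
      rw [this]; exact Finset.mem_insert_self _ _
    · have : g (n₁ + n₂ + 1) = insert E (f₂ n₂) := by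
        simp [hg, show ¬ n₁ + n₂ + 1 ≤ n₁ by omega, show ¬ n₁ + n₂ + 1 ≤ n₁ + n₂ by omega]
      rw [this]
      exact fun x hx => Finset.mem_insert_of_mem (hf2sub (hf1sub hx))
    · intro t _ D' hD'
      by_cases h : t ≤ n₁
      · have : g t = f₁ t := by simp [hg, h]
        exact hf1w t h D' (this ▸ hD')
      · by_cases h2 : t ≤ n₁ + n₂
        · have : g t = f₂ (t - n₁) := hg2 t (by omega) h2
          exact hf2w (t - n₁) (by omega) D' (this ▸ hD')
        · have : g t = insert E (f₂ n₂) := by simp [hg, h, h2]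
          rw [this] at hD'
          rcases Finset.mem_insert.1 hD' with rfl | hD'
          · exact WDeriv.res hC hD hres hw
          · exact hf2w n₂ le_rfl D' hD'

lemma exists_refutation {F : Set (Clause X)} {w k : ℕ}
    (hk : ∀ C ∈ F, Finset.card C ≤ k) (hkw : k ≤ w)
    (h : WDeriv F w (∅ : Clause X)) :
    ∃ π' : ResRefutation F, π'.widthLE w := by
  obtain ⟨n, f, h0, hstep, hmem, _, hw⟩ := build h ∅ (by simp)
  exact ⟨⟨n, f, h0, hmem, hstep⟩, fun t ht D hD => wd_card hk hkw (hw t ht D hD)⟩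

end RdnfAux

/-- if an unsatisfiable `k`-CNF formula `F` has an `r`-DNF resolution
refutation in space at most `s`, then `F` has a standard resolution refutation of
width at most `(s - 2) * r + k - 1`. -/
theorem rdnf_space_upper_bounds_width {X : Type} [DecidableEq X]
    (F : Finset (Clause X)) (k r s : ℕ) (hk : ∀ C ∈ F, C.card ≤ k)
    (π : RDNFRefutation r (F : Set (Clause X))) (hs : π.spaceLE s) :
    ∃ π' : ResRefutation (F : Set (Clause X)), π'.widthLE ((s - 2) * r + k - 1) := by
  classical
  by_cases h0 : (∅ : Clause X) ∈ F
  · -- trivial refutation: download the empty clause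
    refine ⟨⟨1, fun t => if t = 0 then ∅ else {∅}, by simp, by simp, ?_⟩, ?_⟩
    · intro t ht
      interval_cases t
      simpa using ResStep.download (F := (F : Set (Clause X))) ∅ ∅ (by simpa using h0)
    · intro t ht C hC
      simp only at hC
      split at hC
      · simp at hC
      · simp only [Finset.mem_singleton] at hC
        simp [hC]
  -- main case
  have hFmem : ∃ A, A ∈ F := by
    by_contra hF
    push_neg at hF
    have hempty : ∀ t, t ≤ π.len → π.conf t = ∅ := by
      intro t
      induction t with
      | zero => intro _; exact π.init
      | succ t ih =>
        intro ht
        have he := ih (by omega)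
        obtain ⟨Q, hQ, hst⟩ : ∃ Q, π.conf (t + 1) = Q ∧
            RDNFStep r (F : Set (Clause X)) (π.conf t) Q := ⟨_, rfl, π.step t (by omega)⟩
        cases hst with
        | download A hA => exact absurd (Finset.mem_coe.1 hA) (hF A)
        | cut T G H hTne hTr h1 h2 =>
          rw [he] at h1; exact absurd h1 (Finset.notMem_empty _)
        | andIntro T T' G hr2 h1 h2 =>
          rw [he] at h1; exact absurd h1 (Finset.notMem_empty _)
        | andElim T T' G h1 hsub hne =>
          rw [he] at h1; exact absurd h1 (Finset.notMem_empty _)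
        | weaken G H hG hH =>
          rw [he] at hG; exact absurd hG (Finset.notMem_empty _)
        | erase G hG =>
          rw [he] at hG; exact absurd hG (Finset.notMem_empty _)
    exact absurd π.final (by rw [hempty π.len le_rfl]; simp)
  have hrs : 1 ≤ r ∧ 3 ≤ s := by
    have hex : ∃ t, t ≤ π.len ∧ (∅ : DNF X) ∈ π.conf t := ⟨π.len, le_rfl, π.final⟩
    have hspec := Nat.find_spec hex
    set t₀ := Nat.find hex with ht₀def
    obtain ⟨ht₀len, ht₀mem⟩ := hspec
    have ht₀pos : t₀ ≠ 0 := by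
      intro h
      rw [h, π.init] at ht₀mem
      simp at ht₀mem
    have hprev : (∅ : DNF X) ∉ π.conf (t₀ - 1) := by
      intro hmem
      exact Nat.find_min hex (show t₀ - 1 < Nat.find hex by rw [← ht₀def]; omega) ⟨by omega, hmem⟩
    obtain ⟨Q, hQ, hst⟩ : ∃ Q, π.conf (t₀ - 1 + 1) = Q ∧
        RDNFStep r (F : Set (Clause X)) (π.conf (t₀ - 1)) Q :=
      ⟨_, rfl, π.step (t₀ - 1) (by omega)⟩
    have ht01 : t₀ - 1 + 1 = t₀ := by omega
    rw [ht01] at hQ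
    cases hst with
    | download A hA =>
      rw [hQ] at ht₀mem
      rcases Finset.mem_insert.1 ht₀mem with he | hmem
      · exfalso
        have hAe : A = ∅ := by
          have := he.symm
          simp only [clauseToDNF] at this
          exact Finset.image_eq_empty.1 this
        exact h0 (hAe ▸ Finset.mem_coe.1 hA)
      · exact absurd hmem hprev
    | cut T G H hTne hTr h1 h2 =>
      rw [hQ] at ht₀mem
      rcases Finset.mem_insert.1 ht₀mem with he | hmem
      swap
      · exact absurd hmem hprev
      obtain ⟨hGe, hHe⟩ := Finset.union_eq_empty.1 he.symm
      subst hGe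
      subst hHe
      constructor
      · have := Finset.card_pos.2 hTne
        omega
      · have hsub3 : ({(∅ : DNF X), insert T ∅,
            T.image fun l => ({negLit l} : Finset (Lit X))} : Finset (DNF X)) ⊆ π.conf t₀ := by
          intro G hG
          rw [hQ]
          simp only [Finset.mem_insert, Finset.mem_singleton] at hG
          rcases hG with rfl | rfl | rfl
          · simpa using Finset.mem_insert_self (∅ ∪ ∅ : DNF X) (π.conf (t₀ - 1))
          · exact Finset.mem_insert_of_mem h1
          · exact Finset.mem_insert_of_mem (by simpa using h2)
        have hd1 : (∅ : DNF X) ≠ insert T ∅ := fun h => Finset.insert_ne_empty _ _ h.symm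
        have hd2 : (∅ : DNF X) ≠ T.image fun l => ({negLit l} : Finset (Lit X)) := by
          intro h
          have := hTne.image (fun l => ({negLit l} : Finset (Lit X)))
          rw [← h] at this
          exact absurd this (by simp)
        have hd3 : (insert T ∅ : DNF X) ≠ T.image fun l => ({negLit l} : Finset (Lit X)) := by
          intro h
          have hT : T ∈ T.image fun l => ({negLit l} : Finset (Lit X)) := by
            rw [← h]; exact Finset.mem_insert_self _ _
          obtain ⟨l, hl, hTl⟩ := Finset.mem_image.1 hT
          rw [← hTl] at hl
          have hll : l = negLit l := Finset.mem_singleton.1 hl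
          have := congrArg Prod.snd hll
          simp [negLit] at this
        have e1 : (∅ : DNF X) ∉ ({insert T ∅,
            T.image fun l => ({negLit l} : Finset (Lit X))} : Finset (DNF X)) := by
          simp only [Finset.mem_insert, Finset.mem_singleton]
          exact not_or.2 ⟨hd1, hd2⟩
        have e2 : (insert T ∅ : DNF X) ∉
            ({T.image fun l => ({negLit l} : Finset (Lit X))} : Finset (DNF X)) := by
          simp only [Finset.mem_singleton]
          exact hd3
        have hcard3 : ({(∅ : DNF X), insert T ∅,
            T.image fun l => ({negLit l} : Finset (Lit X))} : Finset (DNF X)).card = 3 := by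
          rw [Finset.card_insert_of_notMem e1, Finset.card_insert_of_notMem e2,
            Finset.card_singleton]
        have hle := Finset.card_le_card hsub3
        have := hs t₀ ht₀len
        omega
    | andIntro T T' G hr2 h1 h2 =>
      rw [hQ] at ht₀mem
      rcases Finset.mem_insert.1 ht₀mem with he | hmem
      · exact absurd he.symm (Finset.insert_ne_empty _ _)
      · exact absurd hmem hprev
    | andElim T T' G h1 hsub hne =>
      rw [hQ] at ht₀mem
      rcases Finset.mem_insert.1 ht₀mem with he | hmem
      · exact absurd he.symm (Finset.insert_ne_empty _ _)
      · exact absurd hmem hprev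
    | weaken G H hG hH =>
      rw [hQ] at ht₀mem
      rcases Finset.mem_insert.1 ht₀mem with he | hmem
      · obtain ⟨hGe, hHe⟩ := Finset.union_eq_empty.1 he.symm
        subst hGe
        exact absurd hG hprev
      · exact absurd hmem hprev
    | erase G hG =>
      rw [hQ] at ht₀mem
      exact absurd (Finset.mem_of_mem_erase ht₀mem) hprev
  obtain ⟨hr1, hs3⟩ := hrs
  obtain ⟨A₀, hA₀⟩ := hFmem
  have hk1 : 1 ≤ k := by
    have h1 : A₀.Nonempty := Finset.nonempty_iff_ne_empty.2 (fun h => h0 (h ▸ hA₀))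
    exact le_trans (Finset.card_pos.2 h1) (hk A₀ hA₀)
  set w := (s - 2) * r + k - 1 with hwdef
  have hsr1 : 1 ≤ (s - 2) * r := by
    have h2 : 1 ≤ s - 2 := by omega
    calc 1 = 1 * 1 := by omega
      _ ≤ (s - 2) * r := Nat.mul_le_mul h2 hr1
  have hw1 : w + 1 = (s - 2) * r + k := by
    rw [hwdef]
    exact Nat.sub_add_cancel (le_trans hk1 (Nat.le_add_left k _))
  have hkw : k ≤ w := by
    rw [hwdef]
    exact Nat.le_pred_of_lt (Nat.lt_add_of_pos_left hsr1)
  have hk' : ∀ C ∈ (F : Set (Clause X)), Finset.card C ≤ k := fun C hC => hk C hC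
  by_cases hW : RdnfAux.WDeriv (F : Set (Clause X)) w (∅ : Clause X)
  · exact RdnfAux.exists_refutation hk' hkw hW
  exfalso
  have hrdnf : ∀ t, t ≤ π.len → ∀ G ∈ π.conf t, IsRDNF r G := by
    intro t
    induction t with
    | zero => intro _ G hG; rw [π.init] at hG; simp at hG
    | succ t ih =>
      intro ht
      have hprev := ih (by omega)
      obtain ⟨Q, hQ, hst⟩ : ∃ Q, π.conf (t + 1) = Q ∧
          RDNFStep r (F : Set (Clause X)) (π.conf t) Q := ⟨_, rfl, π.step t (by omega)⟩
      rw [hQ]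
      cases hst with
      | download A hA =>
        intro G hG
        rcases Finset.mem_insert.1 hG with rfl | hG
        · intro T hT
          obtain ⟨l, _, rfl⟩ := Finset.mem_image.1 hT
          simpa using hr1
        · exact hprev G hG
      | cut T G H hTne hTr h1 h2 =>
        intro G' hG'
        rcases Finset.mem_insert.1 hG' with rfl | hG'
        · intro T' hT'
          rcases Finset.mem_union.1 hT' with h | h
          · exact hprev _ h1 T' (Finset.mem_insert_of_mem h)
          · exact hprev _ h2 T' (Finset.mem_union_right _ h)
        · exact hprev G' hG'
      | andIntro T T' G hr2 h1 h2 =>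
        intro G' hG'
        rcases Finset.mem_insert.1 hG' with rfl | hG'
        · intro T'' hT''
          rcases Finset.mem_insert.1 hT'' with rfl | h
          · exact hr2
          · exact hprev _ h1 T'' (Finset.mem_insert_of_mem h)
        · exact hprev G' hG'
      | andElim T T' G h1 hsub hne =>
        intro G' hG'
        rcases Finset.mem_insert.1 hG' with rfl | hG'
        · intro T'' hT''
          rcases Finset.mem_insert.1 hT'' with rfl | h
          · exact le_trans (Finset.card_le_card hsub)
              (hprev _ h1 T (Finset.mem_insert_self _ _))
          · exact hprev _ h1 T'' (Finset.mem_insert_of_mem h)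
        · exact hprev G' hG'
      | weaken G H hG hH =>
        intro G' hG'
        rcases Finset.mem_insert.1 hG' with rfl | hG'
        · intro T hT
          rcases Finset.mem_union.1 hT with h | h
          · exact hprev _ hG T h
          · exact hH T h
        · exact hprev G' hG'
      | erase G hG =>
        intro G' hG'
        exact hprev G' (Finset.mem_of_mem_erase hG')
  have key : ∀ t, t ≤ π.len → ∃ α, RdnfAux.Good (F : Set (Clause X)) w α ∧
      ((∀ G ∈ π.conf t, ∃ T ∈ G, T ⊆ α) ∨
       (∃ A ∈ F, clauseToDNF A ∈ π.conf t ∧ (π.conf t).card = s ∧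
         ∀ G ∈ π.conf t, G ≠ clauseToDNF A → ∃ T ∈ G, T ⊆ α)) := by
    intro t
    induction t with
    | zero =>
      intro _
      exact ⟨∅, RdnfAux.good_empty hW, Or.inl (by rw [π.init]; simp)⟩
    | succ t ih =>
      intro ht
      obtain ⟨α, hα, hinv⟩ := ih (by omega)
      have hcard1 := hs (t + 1) ht
      have hrd := hrdnf t (by omega)
      obtain ⟨Q, hQ, hst⟩ : ∃ Q, π.conf (t + 1) = Q ∧
          RDNFStep r (F : Set (Clause X)) (π.conf t) Q := ⟨_, rfl, π.step t (by omega)⟩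
      cases hst with
      | download A hA =>
        by_cases hin : clauseToDNF A ∈ π.conf t
        · rw [Finset.insert_eq_self.2 hin] at hQ
          rw [hQ]
          exact ⟨α, hα, hinv⟩
        · have hcardeq : (π.conf (t + 1)).card = (π.conf t).card + 1 := by
            rw [hQ, Finset.card_insert_of_notMem hin]
          have hsat : ∀ G' ∈ π.conf t, ∃ T' ∈ G', T' ⊆ α := by
            rcases hinv with h | ⟨A', _, _, hcs, _⟩
            · exact h
            · omega
          by_cases hm : (π.conf t).card + 2 ≤ s
          · obtain ⟨α', hα', hsat', l, hlA, hlα⟩ :=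
              RdnfAux.pay hk' hw1 α (π.conf t) A hα hA hm hrd hsat
            refine ⟨α', hα', Or.inl ?_⟩
            rw [hQ]
            intro G' hG'
            rcases Finset.mem_insert.1 hG' with rfl | hG'
            · exact ⟨{l}, Finset.mem_image.2 ⟨l, hlA, rfl⟩, by simpa using hlα⟩
            · exact hsat' G' hG'
          · refine ⟨α, hα, Or.inr ⟨A, Finset.mem_coe.1 hA, ?_, ?_, ?_⟩⟩
            · rw [hQ]; exact Finset.mem_insert_self _ _
            · omega
            · rw [hQ]
              intro G' hG' hne
              rcases Finset.mem_insert.1 hG' with rfl | hG'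
              · exact absurd rfl hne
              · exact hsat G' hG'
      | cut T G H hTne hTr h1 h2 =>
        by_cases hin : G ∪ H ∈ π.conf t
        · rw [Finset.insert_eq_self.2 hin] at hQ
          rw [hQ]
          exact ⟨α, hα, hinv⟩
        · have hcardeq : (π.conf (t + 1)).card = (π.conf t).card + 1 := by
            rw [hQ, Finset.card_insert_of_notMem hin]
          have hsat : ∀ G' ∈ π.conf t, ∃ T' ∈ G', T' ⊆ α := by
            rcases hinv with h | ⟨A', _, _, hcs, _⟩
            · exact h
            · omega
          refine ⟨α, hα, Or.inl ?_⟩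
          rw [hQ]
          intro G' hG'
          rcases Finset.mem_insert.1 hG' with rfl | hG'
          swap
          · exact hsat G' hG'
          obtain ⟨T₀, hT₀, hT₀sub⟩ := hsat _ h1
          rcases Finset.mem_insert.1 hT₀ with heq | hT₀G
          · rw [heq] at hT₀sub
            obtain ⟨S₀, hS₀, hS₀sub⟩ := hsat _ h2
            rcases Finset.mem_union.1 hS₀ with hS | hS
            · obtain ⟨l, hlT, hSeq⟩ := Finset.mem_image.1 hS
              exact (RdnfAux.cons_not_both hα.1 (hT₀sub hlT)
                (hS₀sub (by rw [← hSeq]; exact Finset.mem_singleton_self _))).elim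
            · exact ⟨S₀, Finset.mem_union_right _ hS, hS₀sub⟩
          · exact ⟨T₀, Finset.mem_union_left _ hT₀G, hT₀sub⟩
      | andIntro T T' G hr2 h1 h2 =>
        by_cases hin : insert (T ∪ T') G ∈ π.conf t
        · rw [Finset.insert_eq_self.2 hin] at hQ
          rw [hQ]
          exact ⟨α, hα, hinv⟩
        · have hcardeq : (π.conf (t + 1)).card = (π.conf t).card + 1 := by
            rw [hQ, Finset.card_insert_of_notMem hin]
          have hsat : ∀ G' ∈ π.conf t, ∃ T' ∈ G', T' ⊆ α := by
            rcases hinv with h | ⟨A', _, _, hcs, _⟩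
            · exact h
            · omega
          refine ⟨α, hα, Or.inl ?_⟩
          rw [hQ]
          intro G' hG'
          rcases Finset.mem_insert.1 hG' with rfl | hG'
          swap
          · exact hsat G' hG'
          obtain ⟨T₀, hT₀, hT₀sub⟩ := hsat _ h1
          rcases Finset.mem_insert.1 hT₀ with heq | hT₀G
          · obtain ⟨T₁, hT₁, hT₁sub⟩ := hsat _ h2
            rcases Finset.mem_insert.1 hT₁ with heq' | hT₁G
            · refine ⟨T ∪ T', Finset.mem_insert_self _ _, Finset.union_subset ?_ ?_⟩
              · rw [← heq]; exact hT₀sub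
              · rw [← heq']; exact hT₁sub
            · exact ⟨T₁, Finset.mem_insert_of_mem hT₁G, hT₁sub⟩
          · exact ⟨T₀, Finset.mem_insert_of_mem hT₀G, hT₀sub⟩
      | andElim T T' G h1 hsub hne =>
        by_cases hin : insert T' G ∈ π.conf t
        · rw [Finset.insert_eq_self.2 hin] at hQ
          rw [hQ]
          exact ⟨α, hα, hinv⟩
        · have hcardeq : (π.conf (t + 1)).card = (π.conf t).card + 1 := by
            rw [hQ, Finset.card_insert_of_notMem hin]
          have hsat : ∀ G' ∈ π.conf t, ∃ T' ∈ G', T' ⊆ α := by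
            rcases hinv with h | ⟨A', _, _, hcs, _⟩
            · exact h
            · omega
          refine ⟨α, hα, Or.inl ?_⟩
          rw [hQ]
          intro G' hG'
          rcases Finset.mem_insert.1 hG' with rfl | hG'
          swap
          · exact hsat G' hG'
          obtain ⟨T₀, hT₀, hT₀sub⟩ := hsat _ h1
          rcases Finset.mem_insert.1 hT₀ with heq | hT₀G
          · rw [heq] at hT₀sub
            exact ⟨T', Finset.mem_insert_self _ _, fun m hm => hT₀sub (hsub hm)⟩
          · exact ⟨T₀, Finset.mem_insert_of_mem hT₀G, hT₀sub⟩
      | weaken G H hG hH =>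
        by_cases hin : G ∪ H ∈ π.conf t
        · rw [Finset.insert_eq_self.2 hin] at hQ
          rw [hQ]
          exact ⟨α, hα, hinv⟩
        · have hcardeq : (π.conf (t + 1)).card = (π.conf t).card + 1 := by
            rw [hQ, Finset.card_insert_of_notMem hin]
          have hsat : ∀ G' ∈ π.conf t, ∃ T' ∈ G', T' ⊆ α := by
            rcases hinv with h | ⟨A', _, _, hcs, _⟩
            · exact h
            · omega
          refine ⟨α, hα, Or.inl ?_⟩
          rw [hQ]
          intro G' hG'
          rcases Finset.mem_insert.1 hG' with rfl | hG'
          swap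
          · exact hsat G' hG'
          obtain ⟨T₀, hT₀, hT₀sub⟩ := hsat _ hG
          exact ⟨T₀, Finset.mem_union_left _ hT₀, hT₀sub⟩
      | erase G hG =>
        rcases hinv with hsat | ⟨A, hAF, hAin, hcs, hsat⟩
        · refine ⟨α, hα, Or.inl ?_⟩
          rw [hQ]
          intro G' hG'
          exact hsat G' (Finset.mem_of_mem_erase hG')
        · by_cases hGA : G = clauseToDNF A
          · refine ⟨α, hα, Or.inl ?_⟩
            rw [hQ]
            intro G' hG'
            obtain ⟨hne, hmem⟩ := Finset.mem_erase.1 hG'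
            exact hsat G' hmem (by rw [hGA] at hne; exact hne)
          · set S := ((π.conf t).erase G).erase (clauseToDNF A) with hSdef
            have hAerase : clauseToDNF A ∈ (π.conf t).erase G :=
              Finset.mem_erase.2 ⟨fun h => hGA h.symm, hAin⟩
            have hScard : S.card + 2 ≤ s := by
              have h1 : ((π.conf t).erase G).card = (π.conf t).card - 1 :=
                Finset.card_erase_of_mem hG
              have h2 : S.card = ((π.conf t).erase G).card - 1 :=
                Finset.card_erase_of_mem hAerase
              have h3 : 1 ≤ (π.conf t).card := Finset.card_pos.2 ⟨G, hG⟩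
              omega
            have hSr : ∀ G' ∈ S, IsRDNF r G' := fun G' hG' =>
              hrd G' (Finset.mem_of_mem_erase (Finset.mem_of_mem_erase hG'))
            have hSsat : ∀ G' ∈ S, ∃ T ∈ G', T ⊆ α := by
              intro G' hG'
              obtain ⟨hne, h2'⟩ := Finset.mem_erase.1 hG'
              exact hsat G' (Finset.mem_of_mem_erase h2') hne
            obtain ⟨α', hα', hsat', l, hlA, hlα⟩ :=
              RdnfAux.pay hk' hw1 α S A hα (Finset.mem_coe.2 hAF) hScard hSr hSsat
            refine ⟨α', hα', Or.inl ?_⟩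
            rw [hQ]
            intro G' hG'
            by_cases hGA' : G' = clauseToDNF A
            · subst hGA'
              exact ⟨{l}, Finset.mem_image.2 ⟨l, hlA, rfl⟩, by simpa using hlα⟩
            · exact hsat' G' (Finset.mem_erase.2 ⟨hGA', hG'⟩)
  obtain ⟨α, hα, hinv⟩ := key π.len le_rfl
  rcases hinv with hsat | ⟨A, hAF, _, _, hsat⟩
  · obtain ⟨T, hT, _⟩ := hsat ∅ π.final
    simp at hT
  · have hAne : clauseToDNF A ≠ ∅ := by
      intro h
      simp only [clauseToDNF] at h
      exact h0 (Finset.image_eq_empty.1 h ▸ hAF)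
    obtain ⟨T, hT, _⟩ := hsat ∅ π.final (fun h => hAne h.symm)
    simp at hT
end

section
/- Let G be a graph of maximum degree d, A a clause of the Tseitin formula Ts(G,χ), and C' = C ∪ {A}. Then d·μ(C') + 1 ≥ μ(C). -/
/-- The edges of `G` incident to the vertex `v`. -/
def incidentEdges {V : Type} [Fintype V] [DecidableEq V] (G : SimpleGraph V)
    [DecidableRel G.Adj] (v : V) : Finset (Sym2 V) :=
  G.edgeFinset.filter (fun e => v ∈ e)

/-- The canonical CNF encoding `PARITY_{v,χ}` of the parity constraint
`∑_{e ∋ v} x_e ≡ χ(v) (mod 2)`: for each assignment `f` of the edge variables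
violating the constraint at `v`, the clause over the edges incident to `v`
falsified exactly by `f`. -/
def parityCNF {V : Type} [Fintype V] [DecidableEq V] (G : SimpleGraph V)
    [DecidableRel G.Adj] (χ : V → ZMod 2) (v : V) : Set (Clause (Sym2 V)) :=
  { C | ∃ f : Sym2 V → Bool,
      (∑ e ∈ incidentEdges G v, (if f e then (1 : ZMod 2) else 0)) ≠ χ v ∧
      C = (incidentEdges G v).image (fun e => (e, ! f e)) }

/-- The Tseitin formula `Ts(G, χ) = ⋀_{v ∈ V} PARITY_{v,χ}`, as a set of clauses
over the edge variables. -/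
def Tseitin {V : Type} [Fintype V] [DecidableEq V] (G : SimpleGraph V)
    [DecidableRel G.Adj] (χ : V → ZMod 2) : Set (Clause (Sym2 V)) :=
  ⋃ v : V, parityCNF G χ v

/-- The assignment `α` to the edge variables satisfies the parity constraint at `v`. -/
def SatParity {V : Type} [Fintype V] [DecidableEq V] (G : SimpleGraph V)
    [DecidableRel G.Adj] (χ : V → ZMod 2) (α : Sym2 V → Bool) (v : V) : Prop :=
  (∑ e ∈ incidentEdges G v, (if α e then (1 : ZMod 2) else 0)) = χ v

/-- The term `T` together with the parity axioms of the vertices in `V'` is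
unsatisfiable. -/
def UnsatWith {V : Type} [Fintype V] [DecidableEq V] (G : SimpleGraph V)
    [DecidableRel G.Adj] (χ : V → ZMod 2) (T : Finset (Lit (Sym2 V)))
    (V' : Finset V) : Prop :=
  ¬ ∃ α : Sym2 V → Bool, SatTerm α T ∧ ∀ v ∈ V', ∀ C ∈ parityCNF G χ v, SatClause α C

/-- The term complexity measure: `μ(T)` is the least number of parity axioms of
`Ts(G,χ)` that together with `T` are contradictory. -/
noncomputable def muT {V : Type} [Fintype V] [DecidableEq V] (G : SimpleGraph V)
    [DecidableRel G.Adj] (χ : V → ZMod 2) (T : Finset (Lit (Sym2 V))) : ℕ :=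
  sInf { n : ℕ | ∃ V' : Finset V, V'.card = n ∧ UnsatWith G χ T V' }

/-- The configuration complexity measure: `μ(𝒞)` is the maximum of `μ(T)` over
all terms `T` implying the configuration `𝒞`. -/
noncomputable def muC {V : Type} [Fintype V] [DecidableEq V] (G : SimpleGraph V)
    [DecidableRel G.Adj] (χ : V → ZMod 2) (𝒞 : Config (Sym2 V)) : ℕ :=
  sSup { m : ℕ | ∃ T : Finset (Lit (Sym2 V)),
    (∀ α : Sym2 V → Bool, SatTerm α T → SatConfig α 𝒞) ∧ muT G χ T = m }

private lemma sum_sum_incident {V : Type} [Fintype V] [DecidableEq V] (G : SimpleGraph V)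
    [DecidableRel G.Adj] (g : Sym2 V → ZMod 2) :
    ∑ v : V, ∑ e ∈ incidentEdges G v, g e = 0 := by
  classical
  unfold incidentEdges
  simp_rw [Finset.sum_filter]
  rw [Finset.sum_comm]
  apply Finset.sum_eq_zero
  intro e he
  rw [← Finset.sum_filter, Finset.sum_const]
  have hcard : (Finset.univ.filter (fun v : V => v ∈ e)).card = 2 := by
    induction e with
    | _ a b =>
      have hab : a ≠ b := G.ne_of_adj (SimpleGraph.mem_edgeFinset.mp he)
      have : (Finset.univ.filter (fun v : V => v ∈ s(a, b))) = {a, b} := by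
        ext x; simp [Sym2.mem_iff]
      rw [this, Finset.card_pair hab]
  rw [hcard, two_nsmul, CharTwo.add_self_eq_zero]

private lemma parity_of_sat {V : Type} [Fintype V] [DecidableEq V] (G : SimpleGraph V)
    [DecidableRel G.Adj] (χ : V → ZMod 2) (α : Sym2 V → Bool) (v : V)
    (h : ∀ C ∈ parityCNF G χ v, SatClause α C) : SatParity G χ α v := by
  by_contra hne
  obtain ⟨l, hl, hsat⟩ := h _ ⟨α, hne, rfl⟩
  obtain ⟨e, he, rfl⟩ := Finset.mem_image.mp hl
  simp [SatLit] at hsat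

private lemma unsat_univ {V : Type} [Fintype V] [DecidableEq V] (G : SimpleGraph V)
    [DecidableRel G.Adj] (χ : V → ZMod 2) (hodd : ∑ v : V, χ v = 1)
    (T : Finset (Lit (Sym2 V))) : UnsatWith G χ T Finset.univ := by
  rintro ⟨α, hT, hpar⟩
  have hp : ∀ v : V, SatParity G χ α v :=
    fun v => parity_of_sat G χ α v (hpar v (Finset.mem_univ v))
  have : (1 : ZMod 2) = 0 := by
    calc (1 : ZMod 2) = ∑ v : V, χ v := hodd.symm
    _ = ∑ v : V, ∑ e ∈ incidentEdges G v, (if α e then (1 : ZMod 2) else 0) :=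
        Finset.sum_congr rfl (fun v _ => (hp v).symm)
    _ = 0 := sum_sum_incident G _
  exact one_ne_zero this

/-- for a clause `A` of the Tseitin formula over a graph of maximum
degree `d`, downloading `A` can decrease the measure by at most a factor:
`d * μ(𝒞 ∪ {A}) + 1 ≥ μ(𝒞)`. -/
theorem muC_axiom_download {V : Type} [Fintype V] [DecidableEq V]
    (G : SimpleGraph V) [DecidableRel G.Adj] (χ : V → ZMod 2) (d : ℕ)
    (hconn : G.Connected) (hdeg : ∀ v : V, G.degree v ≤ d)
    (hodd : ∑ v : V, χ v = 1)
    (A : Clause (Sym2 V)) (hA : A ∈ Tseitin G χ) (𝒞 : Config (Sym2 V)) :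
    muC G χ 𝒞 ≤ d * muC G χ (insert A 𝒞) + 1 := by
  classical
  obtain ⟨v₀, hA'⟩ : ∃ v₀, A ∈ parityCNF G χ v₀ := by
    simpa [Tseitin, Set.mem_iUnion] using hA
  have hsetne : ∀ T : Finset (Lit (Sym2 V)),
      {n : ℕ | ∃ V' : Finset V, V'.card = n ∧ UnsatWith G χ T V'}.Nonempty :=
    fun T => ⟨Finset.univ.card, Finset.univ, rfl, unsat_univ G χ hodd T⟩
  have hmuT_le : ∀ T : Finset (Lit (Sym2 V)), muT G χ T ≤ Fintype.card V :=
    fun T => Nat.sInf_le ⟨Finset.univ, by simp, unsat_univ G χ hodd T⟩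
  have hbdd : BddAbove {m : ℕ | ∃ T : Finset (Lit (Sym2 V)),
      (∀ α : Sym2 V → Bool, SatTerm α T → SatConfig α (insert A 𝒞)) ∧ muT G χ T = m} :=
    ⟨Fintype.card V, by rintro m ⟨T, -, rfl⟩; exact hmuT_le T⟩
  apply csSup_le'
  rintro m ⟨T, hTC, rfl⟩
  have hchoice : ∀ l : Lit (Sym2 V), ∃ V' : Finset V,
      V'.card = muT G χ (insert l T) ∧ UnsatWith G χ (insert l T) V' :=
    fun l => Nat.sInf_mem (hsetne (insert l T))
  choose F hFcard hFunsat using hchoice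
  have hkey : UnsatWith G χ T (insert v₀ (A.biUnion F)) := by
    rintro ⟨α, hT, hpar⟩
    obtain ⟨l, hlA, hl⟩ := hpar v₀ (Finset.mem_insert_self _ _) A hA'
    refine hFunsat l ⟨α, ?_, ?_⟩
    · intro l' hl'
      rcases Finset.mem_insert.mp hl' with rfl | h
      · exact hl
      · exact hT l' h
    · intro v hv
      exact hpar v (Finset.mem_insert_of_mem (Finset.mem_biUnion.mpr ⟨l, hlA, hv⟩))
  have h1 : muT G χ T ≤ (insert v₀ (A.biUnion F)).card :=
    Nat.sInf_le ⟨_, rfl, hkey⟩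
  have hcardA : A.card ≤ d := by
    obtain ⟨f, -, rfl⟩ := hA'
    calc ((incidentEdges G v₀).image (fun e => (e, ! f e))).card
        ≤ (incidentEdges G v₀).card := Finset.card_image_le
      _ = G.degree v₀ := by
          rw [← SimpleGraph.card_incidenceFinset_eq_degree]
          congr 1
          ext e
          simp [incidentEdges, SimpleGraph.mem_incidenceFinset, SimpleGraph.incidenceSet,
            SimpleGraph.mem_edgeFinset, and_comm]
      _ ≤ d := hdeg v₀
  have h3 : ∀ l ∈ A, (F l).card ≤ muC G χ (insert A 𝒞) := by
    intro l hlA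
    rw [hFcard l]
    refine le_csSup hbdd ⟨insert l T, fun α hα => ?_, rfl⟩
    intro C hC
    rcases Finset.mem_insert.mp hC with rfl | h
    · exact ⟨l, hlA, hα l (Finset.mem_insert_self l T)⟩
    · exact hTC α (fun l' hl' => hα l' (Finset.mem_insert_of_mem hl')) C h
  calc muT G χ T ≤ (insert v₀ (A.biUnion F)).card := h1
    _ ≤ (A.biUnion F).card + 1 := Finset.card_insert_le _ _
    _ ≤ (∑ l ∈ A, (F l).card) + 1 := by
        exact Nat.add_le_add_right Finset.card_biUnion_le 1
    _ ≤ A.card * muC G χ (insert A 𝒞) + 1 := by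
        have := Finset.sum_le_card_nsmul A (fun l => (F l).card) (muC G χ (insert A 𝒞)) h3
        simpa [smul_eq_mul] using Nat.add_le_add_right this 1
    _ ≤ d * muC G χ (insert A 𝒞) + 1 :=
        Nat.add_le_add_right (Nat.mul_le_mul_right _ hcardA) 1
end

section
/- For any resolution refutation π of the Tseitin formula Ts(G,χ) over a connected graph G of maximum degree d, and any positive integer r ≤ |V|, there exists a configuration C in π with r/d ≤ μ(C) ≤ r. -/
section Aux

variable {V : Type} [Fintype V] [DecidableEq V] (G : SimpleGraph V) [DecidableRel G.Adj]
  (χ : V → ZMod 2)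

/-- The parity sum at a vertex. -/
def psum (α : Sym2 V → Bool) (v : V) : ZMod 2 :=
  ∑ e ∈ incidentEdges G v, (if α e then (1 : ZMod 2) else 0)

lemma satParity_iff {α : Sym2 V → Bool} {v : V} :
    (∀ C ∈ parityCNF G χ v, SatClause α C) ↔ SatParity G χ α v := by
  constructor
  · intro h
    by_contra hne
    obtain ⟨l, hl, hsat⟩ := h _ ⟨α, hne, rfl⟩
    simp only [Finset.mem_image] at hl
    obtain ⟨e, he, rfl⟩ := hl
    simp [SatLit] at hsat
  · rintro hp C ⟨f, hf, rfl⟩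
    by_contra hno
    apply hf
    rw [← hp]
    apply Finset.sum_congr rfl
    intro e he
    by_cases hfe : f e = α e
    · rw [hfe]
    · have hsl : SatLit α (e, !f e) := by
        show α e = !f e
        revert hfe; cases f e <;> cases α e <;> simp
      exact absurd ⟨(e, !f e), Finset.mem_image_of_mem _ he, hsl⟩ hno

lemma sum_psum (α : Sym2 V → Bool) : ∑ v : V, psum G α v = 0 := by
  unfold psum incidentEdges
  simp only [Finset.sum_filter]
  rw [Finset.sum_comm]
  apply Finset.sum_eq_zero
  intro e he
  rw [← Finset.sum_filter]
  induction e using Sym2.ind with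
  | _ a b =>
    have hab : a ≠ b := (SimpleGraph.mem_edgeFinset.1 he).ne
    have : Finset.univ.filter (· ∈ s(a, b)) = {a, b} := by
      ext x; simp [Sym2.mem_iff]
    rw [this, Finset.sum_pair hab]
    cases α s(a, b) <;> decide

lemma unsatWith_univ (hodd : ∑ v : V, χ v = 1) (T : Finset (Lit (Sym2 V))) :
    UnsatWith G χ T Finset.univ := by
  rintro ⟨α, hT, hsat⟩
  have hp : ∀ v : V, SatParity G χ α v :=
    fun v => (satParity_iff G χ).1 (hsat v (Finset.mem_univ v))
  have h0 : ∑ v : V, psum G α v = 0 := sum_psum G α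
  have h1 : ∑ v : V, psum G α v = ∑ v : V, χ v :=
    Finset.sum_congr rfl (fun v _ => hp v)
  rw [h0, hodd] at h1
  exact zero_ne_one h1

end Aux

section Aux2

variable {V : Type} [Fintype V] [DecidableEq V] (G : SimpleGraph V) [DecidableRel G.Adj]
  (χ : V → ZMod 2)

/-- Flip the value of one edge variable. -/
def toggle (e₀ : Sym2 V) (α : Sym2 V → Bool) : Sym2 V → Bool :=
  fun e => if e = e₀ then !α e else α e

lemma psum_toggle {e₀ : Sym2 V} (he : e₀ ∈ G.edgeFinset) (α : Sym2 V → Bool) (w : V) :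
    psum G (toggle e₀ α) w = psum G α w + (if w ∈ e₀ then 1 else 0) := by
  unfold psum toggle
  by_cases hw : w ∈ e₀
  · have hmem : e₀ ∈ incidentEdges G w := Finset.mem_filter.2 ⟨he, hw⟩
    rw [← Finset.add_sum_erase _ _ hmem, ← Finset.add_sum_erase _
      (fun e => if α e then (1 : ZMod 2) else 0) hmem]
    have h1 : ∑ e ∈ (incidentEdges G w).erase e₀,
        (if (if e = e₀ then !α e else α e) then (1 : ZMod 2) else 0)
        = ∑ e ∈ (incidentEdges G w).erase e₀, (if α e then (1 : ZMod 2) else 0) := by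
      apply Finset.sum_congr rfl
      intro e he'
      rw [if_neg (Finset.ne_of_mem_erase he')]
    rw [h1, if_pos rfl, if_pos hw]
    have : ∀ (b : Bool) (S : ZMod 2),
        (if !b then (1 : ZMod 2) else 0) + S = ((if b then (1 : ZMod 2) else 0) + S) + 1 := by
      intro b S; cases b <;> simp <;> ring_nf <;>
        (try rw [show ((2 : ZMod 2)) = 0 from rfl]) <;> ring
    exact this _ _
  · rw [if_neg hw, add_zero]
    apply Finset.sum_congr rfl
    intro e he'
    have : e ≠ e₀ := by
      rintro rfl; exact hw (Finset.mem_filter.1 he').2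
    rw [if_neg this]

/-- Flip all edges along a walk. -/
def flipWalk : {a b : V} → G.Walk a b → (Sym2 V → Bool) → (Sym2 V → Bool)
  | _, _, SimpleGraph.Walk.nil, α => α
  | a, _, SimpleGraph.Walk.cons (v := c) _ p, α => flipWalk p (toggle s(a, c) α)

lemma zmod2_cancel : ∀ x : ZMod 2, x + 1 + 1 = x := by decide

lemma zmod2_two : ∀ x c : ZMod 2, x + c + c = x := by decide

lemma psum_flipWalk : ∀ {a b : V} (p : G.Walk a b) (α : Sym2 V → Bool) (w : V),
    psum G (flipWalk G p α) w
      = psum G α w + (if w = a then 1 else 0) + (if w = b then 1 else 0) := by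
  intro a b p
  induction p with
  | nil =>
    intro α w
    show psum G α w = _
    exact (zmod2_two _ _).symm
  | @cons a c b h p ih =>
    intro α w
    show psum G (flipWalk G p (toggle s(a, c) α)) w = _
    rw [ih, psum_toggle G (SimpleGraph.mem_edgeFinset.2 h) α w]
    have hac : a ≠ c := h.ne
    rcases eq_or_ne w a with rfl | h1
    · rcases eq_or_ne w c with rfl | h2
      · exact absurd rfl hac
      · simp only [Sym2.mem_iff, if_pos rfl, eq_self_iff_true, true_or, if_true,
          if_neg h2]
        ring
    · rcases eq_or_ne w c with rfl | h2
      · simp only [Sym2.mem_iff, eq_self_iff_true, or_true, if_true, if_neg h1]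
        rw [zmod2_cancel, add_zero]
      · have hmem : ¬(w = a ∨ w = c) := by tauto
        simp only [Sym2.mem_iff, if_neg h1, if_neg h2, if_neg hmem]
        ring

lemma exists_sat (hconn : G.Connected) {u : V} :
    ∀ (V' : Finset V), u ∉ V' → ∃ α : Sym2 V → Bool, ∀ v ∈ V', SatParity G χ α v := by
  intro V'
  induction V' using Finset.induction_on with
  | empty => exact fun _ => ⟨fun _ => false, by simp⟩
  | @insert a s ha ih =>
    intro hu
    have hus : u ∉ s := fun h => hu (Finset.mem_insert_of_mem h)
    have hau : a ≠ u := fun h => hu (h ▸ Finset.mem_insert_self a s)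
    obtain ⟨α, hα⟩ := ih hus
    by_cases hsat : SatParity G χ α a
    · exact ⟨α, fun v hv => (Finset.mem_insert.1 hv).elim (fun h => h ▸ hsat) (hα v)⟩
    · obtain ⟨p⟩ := (hconn a u)
      refine ⟨flipWalk G p α, fun v hv => ?_⟩
      show psum G (flipWalk G p α) v = χ v
      rw [psum_flipWalk]
      rcases Finset.mem_insert.1 hv with rfl | hvs
      · rw [if_pos rfl, if_neg hau]
        have : psum G α v ≠ χ v := hsat
        revert this
        generalize psum G α v = x
        revert x
        generalize χ v = y
        revert y
        decide
      · have hva : v ≠ a := fun h => ha (h ▸ hvs)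
        have hvu : v ≠ u := fun h => hus (h ▸ hvs)
        rw [if_neg hva, if_neg hvu, add_zero, add_zero]
        exact hα v hvs

end Aux2

section Aux3

variable {V : Type} [Fintype V] [DecidableEq V] (G : SimpleGraph V) [DecidableRel G.Adj]
  (χ : V → ZMod 2)

lemma muT_set_nonempty (hodd : ∑ v : V, χ v = 1) (T : Finset (Lit (Sym2 V))) :
    { n : ℕ | ∃ V' : Finset V, V'.card = n ∧ UnsatWith G χ T V' }.Nonempty :=
  ⟨Fintype.card V, Finset.univ, Finset.card_univ, unsatWith_univ G χ hodd T⟩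

lemma muT_le_card (hodd : ∑ v : V, χ v = 1) (T : Finset (Lit (Sym2 V))) :
    muT G χ T ≤ Fintype.card V :=
  Nat.sInf_le ⟨Finset.univ, Finset.card_univ, unsatWith_univ G χ hodd T⟩

lemma muT_exists_witness (hodd : ∑ v : V, χ v = 1) (T : Finset (Lit (Sym2 V))) :
    ∃ V' : Finset V, V'.card = muT G χ T ∧ UnsatWith G χ T V' :=
  Nat.sInf_mem (muT_set_nonempty G χ hodd T)

lemma muC_bddAbove (hodd : ∑ v : V, χ v = 1) (𝒞 : Config (Sym2 V)) :
    BddAbove { m : ℕ | ∃ T : Finset (Lit (Sym2 V)),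
      (∀ α : Sym2 V → Bool, SatTerm α T → SatConfig α 𝒞) ∧ muT G χ T = m } := by
  refine ⟨Fintype.card V, ?_⟩
  rintro m ⟨T, -, rfl⟩
  exact muT_le_card G χ hodd T

lemma muT_le_muC (hodd : ∑ v : V, χ v = 1) {T : Finset (Lit (Sym2 V))}
    {𝒞 : Config (Sym2 V)} (h : ∀ α : Sym2 V → Bool, SatTerm α T → SatConfig α 𝒞) :
    muT G χ T ≤ muC G χ 𝒞 :=
  le_csSup (muC_bddAbove G χ hodd 𝒞) ⟨T, h, rfl⟩

lemma muC_le {𝒞 : Config (Sym2 V)} {n : ℕ}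
    (h : ∀ T : Finset (Lit (Sym2 V)),
      (∀ α : Sym2 V → Bool, SatTerm α T → SatConfig α 𝒞) → muT G χ T ≤ n) :
    muC G χ 𝒞 ≤ n := by
  apply csSup_le'
  rintro m ⟨T, hT, rfl⟩
  exact h T hT

lemma muC_mono (hodd : ∑ v : V, χ v = 1) {𝒞 𝒟 : Config (Sym2 V)}
    (h : ∀ α : Sym2 V → Bool, SatConfig α 𝒞 → SatConfig α 𝒟) :
    muC G χ 𝒞 ≤ muC G χ 𝒟 :=
  muC_le G χ (fun T hT => muT_le_muC G χ hodd (fun α hα => h α (hT α hα)))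

lemma sat_resolvent {X : Type} [DecidableEq X] {α : X → Bool} {E C D : Clause X}
    (h : IsResolvent E C D) (hC : SatClause α C) (hD : SatClause α D) : SatClause α E := by
  obtain ⟨v, b, hvC, hvD, rfl⟩ := h
  obtain ⟨l, hl, hsl⟩ := hC
  by_cases hlb : l = (v, b)
  · subst hlb
    obtain ⟨l', hl', hsl'⟩ := hD
    have hne : l' ≠ (v, !b) := by
      rintro rfl
      rw [SatLit] at hsl hsl'
      simp only at hsl hsl'
      rw [hsl] at hsl'
      exact (Bool.not_ne_self b) hsl'.symm
    exact ⟨l', Finset.mem_union_right _ (Finset.mem_erase.2 ⟨hne, hl'⟩), hsl'⟩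
  · exact ⟨l, Finset.mem_union_left _ (Finset.mem_erase.2 ⟨hlb, hl⟩), hsl⟩

lemma incidentEdges_card_le (d : ℕ) (hdeg : ∀ v : V, G.degree v ≤ d) (v : V) :
    (incidentEdges G v).card ≤ d := by
  have : incidentEdges G v = G.incidenceFinset v := (G.incidenceFinset_eq_filter v).symm
  rw [this, SimpleGraph.card_incidenceFinset_eq_degree]
  exact hdeg v

lemma muC_download (hodd : ∑ v : V, χ v = 1) (d : ℕ) (hdeg : ∀ v : V, G.degree v ≤ d)
    {𝒞 : Config (Sym2 V)} {A : Clause (Sym2 V)} (hA : A ∈ Tseitin G χ) :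
    muC G χ 𝒞 ≤ d * muC G χ (insert A 𝒞) + 1 := by
  classical
  obtain ⟨v, hv⟩ := Set.mem_iUnion.1 hA
  set s := muC G χ (insert A 𝒞) with hs
  apply muC_le
  intro T hT
  have key : ∀ l ∈ A, ∃ W : Finset V, W.card ≤ s ∧ UnsatWith G χ (insert l T) W := by
    intro l hlA
    have h1 : muT G χ (insert l T) ≤ s := by
      apply muT_le_muC G χ hodd
      intro α hα C hC
      rcases Finset.mem_insert.1 hC with rfl | hC𝒞
      · exact ⟨l, hlA, hα l (Finset.mem_insert_self l T)⟩
      · exact hT α (fun l' hl' => hα l' (Finset.mem_insert_of_mem hl')) C hC𝒞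
    obtain ⟨W, hWcard, hWuns⟩ := muT_exists_witness G χ hodd (insert l T)
    exact ⟨W, hWcard.le.trans h1, hWuns⟩
  let W : Lit (Sym2 V) → Finset V := fun l => if h : l ∈ A then (key l h).choose else ∅
  have hWcard : ∀ l ∈ A, (W l).card ≤ s := by
    intro l hl; simp only [W, dif_pos hl]; exact (key l hl).choose_spec.1
  have hWuns : ∀ l ∈ A, UnsatWith G χ (insert l T) (W l) := by
    intro l hl; simp only [W, dif_pos hl]; exact (key l hl).choose_spec.2
  set V'' : Finset V := insert v (A.biUnion W) with hV''
  have hcard : V''.card ≤ d * s + 1 := by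
    calc V''.card ≤ (A.biUnion W).card + 1 := Finset.card_insert_le _ _
    _ ≤ (∑ l ∈ A, (W l).card) + 1 := by
        exact Nat.add_le_add_right (Finset.card_biUnion_le) 1
    _ ≤ A.card * s + 1 := by
        apply Nat.add_le_add_right
        apply Finset.sum_le_card_nsmul
        exact hWcard
    _ ≤ d * s + 1 := by
        apply Nat.add_le_add_right
        apply Nat.mul_le_mul_right
        calc A.card ≤ (incidentEdges G v).card := by
              obtain ⟨f, hf, rfl⟩ := hv
              exact Finset.card_image_le
        _ ≤ d := incidentEdges_card_le G d hdeg v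
  have huns : UnsatWith G χ T V'' := by
    rintro ⟨α, hTα, hax⟩
    have hAsat : SatClause α A :=
      hax v (Finset.mem_insert_self v _) A hv
    obtain ⟨l, hlA, hsl⟩ := hAsat
    apply hWuns l hlA
    refine ⟨α, ?_, ?_⟩
    · intro l' hl'
      rcases Finset.mem_insert.1 hl' with rfl | h
      · exact hsl
      · exact hTα l' h
    · intro w hw C hC
      apply hax w _ C hC
      exact Finset.mem_insert_of_mem (Finset.mem_biUnion.2 ⟨l, hlA, hw⟩)
  calc muT G χ T ≤ V''.card := Nat.sInf_le ⟨V'', rfl, huns⟩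
  _ ≤ d * s + 1 := hcard

lemma muC_step (hodd : ∑ v : V, χ v = 1) (d : ℕ) (hdeg : ∀ v : V, G.degree v ≤ d)
    {𝒞 𝒟 : Config (Sym2 V)} (h : ResStep (Tseitin G χ) 𝒞 𝒟) :
    muC G χ 𝒞 ≤ muC G χ 𝒟 ∨ muC G χ 𝒞 ≤ d * muC G χ 𝒟 + 1 := by
  cases h with
  | download A hA => exact Or.inr (muC_download G χ hodd d hdeg hA)
  | infer E C D hC hD hres =>
    refine Or.inl (muC_mono G χ hodd ?_)
    intro α hα C' hC'
    rcases Finset.mem_insert.1 hC' with rfl | h'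
    · exact sat_resolvent hres (hα C hC) (hα D hD)
    · exact hα C' h'
  | weaken E C hC hsub =>
    refine Or.inl (muC_mono G χ hodd ?_)
    intro α hα C' hC'
    rcases Finset.mem_insert.1 hC' with rfl | h'
    · obtain ⟨l, hl, hsl⟩ := hα C hC
      exact ⟨l, hsub hl, hsl⟩
    · exact hα C' h'
  | erase C hC =>
    refine Or.inl (muC_mono G χ hodd ?_)
    intro α hα C' hC'
    exact hα C' (Finset.mem_of_mem_erase hC')

end Aux3

section Aux4

variable {V : Type} [Fintype V] [DecidableEq V] (G : SimpleGraph V) [DecidableRel G.Adj]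
  (χ : V → ZMod 2)

lemma muC_final {𝒞 : Config (Sym2 V)} (h : (∅ : Clause (Sym2 V)) ∈ 𝒞) :
    muC G χ 𝒞 ≤ 0 := by
  apply muC_le
  intro T hT
  have huns : UnsatWith G χ T ∅ := by
    rintro ⟨α, hα, -⟩
    obtain ⟨l, hl, -⟩ := hT α hα ∅ h
    exact absurd hl (Finset.notMem_empty l)
  exact Nat.sInf_le ⟨∅, Finset.card_empty, huns⟩

lemma card_le_muT_empty (hconn : G.Connected) (hodd : ∑ v : V, χ v = 1) :
    Fintype.card V ≤ muT G χ (∅ : Finset (Lit (Sym2 V))) := by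
  apply le_csInf (muT_set_nonempty G χ hodd ∅)
  rintro n ⟨V', rfl, huns⟩
  by_contra hlt
  push_neg at hlt
  have hne : V' ≠ Finset.univ := (Finset.card_lt_iff_ne_univ V').1 hlt
  have : ¬ ∀ x, x ∈ V' := fun hall => hne (Finset.eq_univ_iff_forall.2 hall)
  obtain ⟨u, hu⟩ := not_forall.1 this
  obtain ⟨α, hα⟩ := exists_sat G χ hconn V' hu
  exact huns ⟨α, fun l hl => absurd hl (Finset.notMem_empty l),
    fun v hv C hC => (satParity_iff G χ).2 (hα v hv) C hC⟩

lemma card_le_muC_empty (hconn : G.Connected) (hodd : ∑ v : V, χ v = 1) :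
    Fintype.card V ≤ muC G χ (∅ : Config (Sym2 V)) := by
  refine (card_le_muT_empty G χ hconn hodd).trans ?_
  apply muT_le_muC G χ hodd
  intro α _ C hC
  exact absurd hC (Finset.notMem_empty C)

end Aux4

/-- in any resolution refutation of the Tseitin formula over a
connected graph of maximum degree `d`, for any positive integer `r ≤ |V|` there is
a configuration `𝒞` of the refutation with `r / d ≤ μ(𝒞) ≤ r`. -/
theorem exists_config_intermediate_measure {V : Type} [Fintype V] [DecidableEq V]
    (G : SimpleGraph V) [DecidableRel G.Adj] (χ : V → ZMod 2) (d : ℕ)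
    (hconn : G.Connected) (hdeg : ∀ v : V, G.degree v ≤ d)
    (hodd : ∑ v : V, χ v = 1)
    (π : ResRefutation (Tseitin G χ)) (r : ℕ) (hr : 0 < r)
    (hrV : r ≤ Fintype.card V) :
    ∃ t ≤ π.len,
      (r : ℝ) / d ≤ (muC G χ (π.conf t) : ℝ) ∧ muC G χ (π.conf t) ≤ r := by
  classical
  have hQex : ∃ t, t ≤ π.len ∧ muC G χ (π.conf t) ≤ r := by
    refine ⟨π.len, le_rfl, ?_⟩
    exact (muC_final G χ π.final).trans (Nat.zero_le r)
  obtain ⟨ht₀len, ht₀r⟩ := Nat.find_spec hQex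
  refine ⟨Nat.find hQex, ht₀len, ?_, ht₀r⟩
  have hdr : ∀ m : ℕ, r ≤ d * m → (r : ℝ) / d ≤ (m : ℝ) := by
    intro m hm
    have hd0 : 0 < d := by
      rcases Nat.eq_zero_or_pos d with rfl | h
      · omega
      · exact h
    rw [div_le_iff₀ (by exact_mod_cast hd0)]
    calc (r : ℝ) ≤ ((d * m : ℕ) : ℝ) := by exact_mod_cast hm
    _ = (m : ℝ) * (d : ℝ) := by push_cast; ring
  cases ht : Nat.find hQex with
  | zero =>
    have h0 : r ≤ muC G χ (π.conf 0) := by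
      rw [π.init]
      exact hrV.trans (card_le_muC_empty G χ hconn hodd)
    rw [ht] at ht₀r
    rcases Nat.eq_zero_or_pos d with rfl | hd
    · simp only [Nat.cast_zero, div_zero]
      positivity
    · calc (r : ℝ) / d ≤ (r : ℝ) := by
            apply div_le_self (by positivity)
            exact_mod_cast hd
      _ ≤ _ := by exact_mod_cast h0
  | succ t =>
    have htlt : t < Nat.find hQex := by omega
    have htlen : t < π.len := by omega
    have hfail : ¬(t ≤ π.len ∧ muC G χ (π.conf t) ≤ r) := Nat.find_min hQex htlt
    have hmt : r < muC G χ (π.conf t) := by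
      by_contra hc
      push_neg at hc
      exact hfail ⟨htlen.le, hc⟩
    have hstep := muC_step G χ hodd d hdeg (π.step t htlen)
    rw [ht] at ht₀r
    rcases hstep with h1 | h2
    · exact absurd (h1.trans ht₀r) (not_le.2 hmt)
    · apply hdr
      omega
end

section
/- For any clause configuration C and any term T implying C (T ⊨ C) that is minimal with this property, the number of literals in T is at most |C| (at most one literal per clause of C is needed); hence the clause space of C is at least the size of any minimal implying term. -/
theorem Finset.card_le_card_of_forall_exists_inter_eq_singleton {α : Type*} [DecidableEq α]
    {T : Finset α} {𝒞 : Finset (Finset α)} (h : ∀ l ∈ T, ∃ C ∈ 𝒞, C ∩ T = {l}) :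
    T.card ≤ 𝒞.card :=
  calc T.card = (T.image singleton).card := (card_image_of_injective _ singleton_injective).symm
    _ ≤ (𝒞.image (· ∩ T)).card := by
      refine card_le_card fun s hs => ?_
      obtain ⟨l, hl, rfl⟩ := mem_image.mp hs
      obtain ⟨C, hC, hCT⟩ := h l hl
      exact mem_image.mpr ⟨C, hC, hCT⟩
    _ ≤ 𝒞.card := card_image_le

open Finset

section

variable {X : Type} [DecidableEq X]

theorem eq_of_fst_eq_of_not_isTrivialClause {T : Finset (Lit X)} (hT : ¬ IsTrivialClause T)
    {l m : Lit X} (hl : l ∈ T) (hm : m ∈ T) (h : m.1 = l.1) : m = l := by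
  obtain ⟨v, b⟩ := l
  obtain ⟨w, c⟩ := m
  simp only at h
  subst h
  by_contra hne
  have hbc : c = !b := by cases b <;> cases c <;> simp_all
  subst hbc
  cases b
  · exact hT ⟨w, hm, hl⟩
  · exact hT ⟨w, hl, hm⟩

theorem SatTerm.update_of_erase {T : Finset (Lit X)} (hT : ¬ IsTrivialClause T) {l : Lit X}
    (hl : l ∈ T) {α : X → Bool} (hα : SatTerm α (T.erase l)) :
    SatTerm (Function.update α l.1 l.2) T := by
  intro m hm
  by_cases h : m.1 = l.1
  · rw [eq_of_fst_eq_of_not_isTrivialClause hT hl hm h]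
    simp [SatLit]
  · simpa [SatLit, h] using hα m (mem_erase.mpr ⟨fun hml => h (hml ▸ rfl), hm⟩)

theorem mem_of_satClause_update {C : Clause X} {α : X → Bool} (hC : ¬ SatClause α C) {l : Lit X}
    (h : SatClause (Function.update α l.1 l.2) C) : l ∈ C := by
  obtain ⟨m, hmC, hm⟩ := h
  by_cases hml : m.1 = l.1
  · have : m.2 = l.2 := by simpa [SatLit, hml, eq_comm] using hm
    rwa [← Prod.ext hml this]
  · exact absurd ⟨m, hmC, by simpa [SatLit, hml] using hm⟩ hC

theorem exists_inter_eq_singleton_of_minimal {𝒞 : Config X} {T : Finset (Lit X)}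
    (hT : ¬ IsTrivialClause T) (himp : ∀ α : X → Bool, SatTerm α T → SatConfig α 𝒞)
    (hmin : ∀ T' ⊂ T, ¬ ∀ α : X → Bool, SatTerm α T' → SatConfig α 𝒞) {l : Lit X} (hl : l ∈ T) :
    ∃ C ∈ 𝒞, C ∩ T = {l} := by
  obtain ⟨α, hαT, hα𝒞⟩ : ∃ α, SatTerm α (T.erase l) ∧ ¬ SatConfig α 𝒞 := by
    simpa using hmin _ (erase_ssubset hl)
  obtain ⟨C, hC, hαC⟩ : ∃ C ∈ 𝒞, ¬ SatClause α C := by simpa [SatConfig] using hα𝒞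
  have hlC : l ∈ C := mem_of_satClause_update hαC (himp _ (hαT.update_of_erase hT hl) C hC)
  refine ⟨C, hC, eq_singleton_iff_unique_mem.mpr ⟨mem_inter.mpr ⟨hlC, hl⟩, fun m hm => ?_⟩⟩
  obtain ⟨hmC, hmT⟩ := mem_inter.mp hm
  by_contra hml
  exact hαC ⟨m, hmC, hαT m (mem_erase.mpr ⟨hml, hmT⟩)⟩

end

theorem minimal_implying_term_small_general {X : Type}
    (𝒞 : Config X)
    (T : Finset (Lit X)) (hT : ¬ IsTrivialClause T)
    (himp : ∀ α : X → Bool, SatTerm α T → SatConfig α 𝒞)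
    (hmin : ∀ T' ⊂ T, ¬ ∀ α : X → Bool, SatTerm α T' → SatConfig α 𝒞) :
    T.card ≤ 𝒞.card := by
  classical
  exact card_le_card_of_forall_exists_inter_eq_singleton fun _ hl =>
    exists_inter_eq_singleton_of_minimal hT himp hmin hl

/-- if `T` is a non-trivial term implying the configuration `𝒞`
(consisting of non-trivial clauses) and `T` is minimal with this property, then
`T` has at most `|𝒞|` literals (at most one literal per clause of `𝒞` is needed);
hence the clause space of `𝒞` is at least the size of any minimal implying term. -/
theorem minimal_implying_term_small {X : Type} [DecidableEq X]
    (𝒞 : Config X) (h𝒞 : ∀ C ∈ 𝒞, ¬ IsTrivialClause C)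
    (T : Finset (Lit X)) (hT : ¬ IsTrivialClause T)
    (himp : ∀ α : X → Bool, SatTerm α T → SatConfig α 𝒞)
    (hmin : ∀ T' ⊂ T, ¬ ∀ α : X → Bool, SatTerm α T' → SatConfig α 𝒞) :
    T.card ≤ 𝒞.card :=
  minimal_implying_term_small_general 𝒞 T hT himp hmin
end

section
/- Let G be a d-regular (s,δ)-edge expander that is connected, and χ a charge function with odd total charge. Then every resolution refutation of Ts(G,χ) requires clause space at least δ·s/d. -/
/-- The edge boundary `∂(U)` of a vertex set `U`: edges of `G` with exactly one
endpoint in `U`. -/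
def edgeBoundary {V : Type} (G : SimpleGraph V) (U : Finset V) : Set (Sym2 V) :=
  { e | e ∈ G.edgeSet ∧ ∃ a b : V, e = s(a, b) ∧ a ∈ U ∧ b ∉ U }

/-- `G` is an `(s, δ)`-edge expander: every vertex set `U` with `|U| ≤ s` has
`|∂(U)| ≥ δ |U|`. -/
def IsEdgeExpander {V : Type} (G : SimpleGraph V) (s : ℕ) (δ : ℝ) : Prop :=
  ∀ U : Finset V, U.card ≤ s → δ * U.card ≤ (edgeBoundary G U).ncard

/-!
Keep a set of literals `ρ`, read as a partial assignment, that satisfies every clause in memory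
and has at most as many literals as there are clauses. Resolution, weakening and erasure preserve
such a `ρ`, and none exists once the empty clause is in memory, so it breaks at the download of
some axiom `A`: no literal of `A` can be added to `ρ`.

If `ρ` only has to be consistent, then `ρ` falsifies all `d` literals of `A`, so `d + 1` clauses
are in memory. If `ρ` must moreover extend, for every set of at most `s` vertices, to an assignment
satisfying their parity constraints, then at a blocked download at `v` every edge at `v` is forced
by at most `s` vertices. A minimal forcing set has its boundary inside the domain of `ρ` plus the
forced edge, and expansion yields `δ (s + 1) ≤ 2 |ρ| + d + 1`. The first bound suffices when
`δ s ≤ d (d + 1)`; otherwise `d ≥ 3`, since a connected `d`-regular graph has a connected set of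
`s` vertices with at most `d s - 2 (s - 1)` boundary edges, and the second bound suffices.
-/

open Finset

section Resolution

variable {X : Type}

def Hits (ρ : Finset (Lit X)) (𝒞 : Config X) : Prop := ∀ C ∈ 𝒞, ∃ l ∈ C, l ∈ ρ

lemma negLit_injective : Function.Injective (negLit (X := X)) :=
  Function.Involutive.injective fun l => by simp [negLit]

lemma hits_insert_iff {ρ : Finset (Lit X)} {𝒞 : Config X} {E : Clause X} [DecidableEq X] :
    Hits ρ (insert E 𝒞) ↔ (∃ l ∈ E, l ∈ ρ) ∧ Hits ρ 𝒞 :=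
  forall_mem_insert _ _ _

lemma Hits.exists_subset_card_le {ρ : Finset (Lit X)} {𝒞 : Config X} (h : Hits ρ 𝒞) :
    ∃ ρ' ⊆ ρ, Hits ρ' 𝒞 ∧ ρ'.card ≤ 𝒞.card := by
  classical
  induction 𝒞 using Finset.induction_on with
  | empty => exact ⟨∅, empty_subset ρ, by simp [Hits], by simp⟩
  | insert C 𝒞 hC ih =>
    obtain ⟨⟨l, hlC, hlρ⟩, h𝒞⟩ := hits_insert_iff.1 h
    obtain ⟨ρ', hρ', hhit, hcard⟩ := ih h𝒞
    refine ⟨insert l ρ', insert_subset hlρ hρ',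
      hits_insert_iff.2 ⟨⟨l, hlC, mem_insert_self l ρ'⟩, fun D hD => ?_⟩, ?_⟩
    · obtain ⟨m, hmD, hmρ⟩ := hhit D hD
      exact ⟨m, hmD, mem_insert_of_mem hmρ⟩
    · rw [card_insert_of_notMem hC]
      exact (card_insert_le l ρ').trans (by omega)

lemma exists_mem_resolvent [DecidableEq X] {α : X → Bool} {ρ : Finset (Lit X)}
    (hα : SatTerm α ρ) {E C D : Clause X} (h : IsResolvent E C D)
    (hC : ∃ l ∈ C, l ∈ ρ) (hD : ∃ l ∈ D, l ∈ ρ) : ∃ l ∈ E, l ∈ ρ := by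
  obtain ⟨v, b, -, -, rfl⟩ := h
  obtain ⟨lC, hlC, hlCρ⟩ := hC
  obtain ⟨lD, hlD, hlDρ⟩ := hD
  by_cases hC' : lC = (v, b)
  · by_cases hD' : lD = (v, !b)
    · subst hC' hD'
      have hb : α v = b := hα _ hlCρ
      have hb' : α v = !b := hα _ hlDρ
      simp [hb] at hb'
    · exact ⟨lD, mem_union_right _ (mem_erase.2 ⟨hD', hlD⟩), hlDρ⟩
  · exact ⟨lC, mem_union_left _ (mem_erase.2 ⟨hC', hlC⟩), hlCρ⟩

lemma exists_satTerm_insert [DecidableEq X] {α : X → Bool} {ρ : Finset (Lit X)}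
    (hα : SatTerm α ρ) {l : Lit X} (hl : negLit l ∉ ρ) : ∃ β, SatTerm β (insert l ρ) := by
  refine ⟨Function.update α l.1 l.2, forall_mem_insert _ _ _ |>.2 ⟨by simp [SatLit], ?_⟩⟩
  intro m hm
  by_cases hml : m.1 = l.1
  · have hsign : m.2 = l.2 := by
      by_contra hne
      have hm' : m = negLit l := Prod.ext hml (Bool.eq_not_iff.2 hne)
      exact hl (hm' ▸ hm)
    simp [SatLit, hml, hsign]
  · simpa [SatLit, Function.update_of_ne hml] using hα m hm

lemma ResStep.hits_or_blocked [DecidableEq X] {F : Set (Clause X)} {𝒞 𝒟 : Config X}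
    (hstep : ResStep F 𝒞 𝒟) {Good : Finset (Lit X) → Prop}
    (hsat : ∀ ρ, Good ρ → ∃ α, SatTerm α ρ) {ρ : Finset (Lit X)} (hρ : Good ρ)
    (hhit : Hits ρ 𝒞) :
    (∃ ρ', Good ρ' ∧ Hits ρ' 𝒟) ∨
      ∃ A ∈ F, 𝒟 = insert A 𝒞 ∧ ∀ l ∈ A, ¬ Good (insert l ρ) := by
  cases hstep with
  | download A hA =>
    by_cases hextend : ∃ l ∈ A, Good (insert l ρ)
    swap
    · exact Or.inr ⟨A, hA, rfl, fun l hl hgood => hextend ⟨l, hl, hgood⟩⟩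
    obtain ⟨l, hl, hgood⟩ := hextend
    refine Or.inl ⟨insert l ρ, hgood, hits_insert_iff.2 ⟨⟨l, hl, mem_insert_self l ρ⟩, ?_⟩⟩
    intro C hC
    obtain ⟨m, hmC, hmρ⟩ := hhit C hC
    exact ⟨m, hmC, mem_insert_of_mem hmρ⟩
  | infer E C D hC hD h =>
    obtain ⟨α, hα⟩ := hsat ρ hρ
    exact Or.inl ⟨ρ, hρ, hits_insert_iff.2
      ⟨exists_mem_resolvent hα h (hhit C hC) (hhit D hD), hhit⟩⟩
  | weaken E C hC hCE =>
    obtain ⟨l, hlC, hlρ⟩ := hhit C hC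
    exact Or.inl ⟨ρ, hρ, hits_insert_iff.2 ⟨⟨l, hCE hlC, hlρ⟩, hhit⟩⟩
  | erase C hC =>
    exact Or.inl ⟨ρ, hρ, fun D hD => hhit D (mem_of_mem_erase hD)⟩

theorem ResRefutation.exists_blocked_download [DecidableEq X] {F : Set (Clause X)}
    (π : ResRefutation F) (Good : Finset (Lit X) → Prop)
    (hmono : ∀ ⦃ρ ρ'⦄, ρ' ⊆ ρ → Good ρ → Good ρ') (hsat : ∀ ρ, Good ρ → ∃ α, SatTerm α ρ)
    (hempty : Good ∅) :
    ∃ t < π.len, ∃ A ∈ F, π.conf (t + 1) = insert A (π.conf t) ∧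
      ∃ ρ, Good ρ ∧ Hits ρ (π.conf t) ∧ ρ.card ≤ (π.conf t).card ∧
        ∀ l ∈ A, ¬ Good (insert l ρ) := by
  by_contra! hnone
  have hinv : ∀ t ≤ π.len, ∃ ρ, Good ρ ∧ Hits ρ (π.conf t) ∧ ρ.card ≤ (π.conf t).card := by
    intro t ht
    induction t with
    | zero => exact ⟨∅, hempty, by simp [π.init, Hits], by simp⟩
    | succ t ih =>
      obtain ⟨ρ, hρ, hhit, hcard⟩ := ih (by omega)
      rcases (π.step t ht).hits_or_blocked hsat hρ hhit with
        ⟨ρ', hρ', hhit'⟩ | ⟨A, hA, hconf, hblocked⟩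
      · obtain ⟨ρ'', hsub, hhit'', hcard''⟩ := hhit'.exists_subset_card_le
        exact ⟨ρ'', hmono hsub hρ', hhit'', hcard''⟩
      · obtain ⟨l, hl, hgood⟩ := hnone t ht A hA hconf ρ hρ hhit hcard
        exact absurd hgood (hblocked l hl)
  obtain ⟨ρ, -, hhit, -⟩ := hinv π.len le_rfl
  obtain ⟨l, hl, -⟩ := hhit ∅ π.final
  exact absurd hl (notMem_empty l)

theorem ResRefutation.exists_card_conf_gt [DecidableEq X] {F : Set (Clause X)}
    (π : ResRefutation F) {w : ℕ} (hw : ∀ A ∈ F, w ≤ A.card) :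
    ∃ t ≤ π.len, w < (π.conf t).card := by
  obtain ⟨t, ht, A, hA, hconf, ρ, ⟨α, hα⟩, hhit, hcard, hblocked⟩ :=
    π.exists_blocked_download (fun ρ => ∃ α, SatTerm α ρ)
      (fun _ _ hsub ⟨α, hα⟩ => ⟨α, fun l hl => hα l (hsub hl)⟩) (fun _ h => h)
      ⟨fun _ => true, fun l hl => absurd hl (notMem_empty l)⟩
  have hneg : A.image negLit ⊆ ρ := by
    intro m hm
    obtain ⟨l, hl, rfl⟩ := mem_image.1 hm
    by_contra hnot
    exact hblocked l hl (exists_satTerm_insert hα hnot)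
  have hAnew : A ∉ π.conf t := by
    intro hAt
    obtain ⟨l, hl, hlρ⟩ := hhit A hAt
    exact hblocked l hl (by rw [insert_eq_of_mem hlρ]; exact ⟨α, hα⟩)
  have hAρ := card_le_card hneg
  rw [card_image_of_injective A negLit_injective] at hAρ
  refine ⟨t + 1, ht, ?_⟩
  rw [hconf, card_insert_of_notMem hAnew]
  have := hw A hA
  omega

end Resolution

lemma exists_subset_card_union_biUnion_le {α ι : Type} [DecidableEq α] [DecidableEq ι]
    (A : Finset α) (W : ι → Finset α) {T : Finset ι} {s : ℕ} (hA : A.card ≤ s)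
    (hT : s < (A ∪ T.biUnion W).card) :
    ∃ T' ⊆ T, ∃ i ∈ T,
      (A ∪ T'.biUnion W).card ≤ s ∧ s < (A ∪ T'.biUnion W).card + (W i).card := by
  induction T using Finset.induction_on with
  | empty => simp only [biUnion_empty, union_empty] at hT; omega
  | insert j T hj ih =>
    by_cases hbig : s < (A ∪ T.biUnion W).card
    · obtain ⟨T', hT', i, hi, h⟩ := ih hbig
      exact ⟨T', hT'.trans (subset_insert j T), i, mem_insert_of_mem hi, h⟩
    · refine ⟨T, subset_insert j T, j, mem_insert_self j T, not_lt.1 hbig, hT.trans_le ?_⟩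
      rw [biUnion_insert, union_left_comm]
      exact (card_union_le _ _).trans_eq (add_comm _ _)

section Graph

variable {V : Type} {G : SimpleGraph V}

lemma edgeBoundary_union_biUnion_subset [DecidableEq V] {ι : Type} {A : Finset V}
    {T : Finset ι} {W : ι → Finset V} {S : Set (Sym2 V)} (hA : edgeBoundary G A ⊆ S)
    (hW : ∀ i ∈ T, edgeBoundary G (W i) ⊆ S) : edgeBoundary G (A ∪ T.biUnion W) ⊆ S := by
  rintro x ⟨hx, a, c, rfl, ha, hc⟩
  simp only [mem_union, mem_biUnion, not_or, not_exists, not_and] at ha hc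
  rcases ha with ha | ⟨i, hi, ha⟩
  · exact hA ⟨hx, a, c, rfl, ha, hc.1⟩
  · exact hW i hi ⟨hx, a, c, rfl, ha, hc.2 i hi⟩

lemma IsEdgeExpander.mul_card_le_card {s : ℕ} {δ : ℝ} (hexp : IsEdgeExpander G s δ)
    {U : Finset V} (hU : U.card ≤ s) {S : Finset (Sym2 V)} (hS : edgeBoundary G U ⊆ S) :
    δ * U.card ≤ S.card :=
  (hexp U hU).trans <| by
    exact_mod_cast (Set.ncard_le_ncard hS S.finite_toSet).trans_eq (Set.ncard_coe_finset S)

lemma IsEdgeExpander.lt_card [Fintype V] [Nonempty V] {s : ℕ} {δ : ℝ}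
    (hexp : IsEdgeExpander G s δ) (hδ : 0 < δ) : s < Fintype.card V := by
  by_contra! hs
  have hbd : edgeBoundary G univ ⊆ ((∅ : Finset (Sym2 V)) : Set (Sym2 V)) :=
    fun _ ⟨_, _, c, _, _, hc⟩ => absurd (mem_univ c) hc
  have := hexp.mul_card_le_card (U := univ) (by rw [card_univ]; exact hs) hbd
  rw [card_univ, card_empty, Nat.cast_zero] at this
  have hV : (0 : ℝ) < Fintype.card V := by exact_mod_cast Fintype.card_pos
  exact (mul_pos hδ hV).not_ge this

variable [Fintype V] [DecidableEq V] [DecidableRel G.Adj]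

variable (G) in
lemma mem_incidentEdges {v : V} {e : Sym2 V} :
    e ∈ incidentEdges G v ↔ e ∈ G.edgeSet ∧ v ∈ e := by
  simp [incidentEdges]

variable (G) in
lemma card_incidentEdges (v : V) : (incidentEdges G v).card = G.degree v := by
  rw [← G.card_incidenceFinset_eq_degree]
  congr 1
  ext e
  simp [mem_incidentEdges, SimpleGraph.incidenceSet]

variable (G) in
lemma edgeBoundary_singleton_subset (v : V) :
    edgeBoundary G {v} ⊆ (incidentEdges G v : Set (Sym2 V)) := by
  rintro x ⟨hx, a, c, rfl, ha, -⟩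
  obtain rfl := mem_singleton.1 ha
  exact (mem_incidentEdges G).2 ⟨hx, Sym2.mem_mk_left _ _⟩

variable (G) in
lemma edgeBoundary_insert_subset {U : Finset V} {a x : V} (ha : a ∈ U) (hx : x ∉ U) :
    edgeBoundary G (insert x U) ⊆
      (edgeBoundary G U \ {s(a, x)}) ∪ ((incidentEdges G x).erase s(a, x) : Set (Sym2 V)) := by
  rintro y ⟨hy, p, q, rfl, hp, hq⟩
  have hq' : q ≠ x ∧ q ∉ U := by simpa [not_or] using hq
  have hne : s(p, q) ≠ s(a, x) := by
    rintro h
    rcases Sym2.eq_iff.1 h with ⟨-, rfl⟩ | ⟨-, rfl⟩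
    exacts [hq'.1 rfl, hq'.2 ha]
  rcases mem_insert.1 hp with rfl | hp
  · exact Or.inr (mem_erase.2 ⟨hne, (mem_incidentEdges G).2 ⟨hy, Sym2.mem_mk_left p q⟩⟩)
  · exact Or.inl ⟨⟨hy, p, q, rfl, hp, hq'.2⟩, hne⟩

variable (G) in
/-- A connected vertex set of size `m`, grown one neighbour at a time: each new vertex brings
at most `d - 1` new boundary edges and turns one old boundary edge into an inner one. -/
lemma exists_card_eq_ncard_edgeBoundary_le (hconn : G.Connected) {d : ℕ}
    (hreg : G.IsRegularOfDegree d) {m : ℕ} (hm : 1 ≤ m) (hmV : m ≤ Fintype.card V) :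
    ∃ U : Finset V, U.card = m ∧ (edgeBoundary G U).ncard + 2 * (m - 1) ≤ d * m := by
  induction m, hm using Nat.le_induction with
  | base =>
    obtain ⟨v⟩ := hconn.nonempty
    refine ⟨{v}, card_singleton v, ?_⟩
    have := Set.ncard_le_ncard (edgeBoundary_singleton_subset G v) (Set.toFinite _)
    rw [Set.ncard_coe_finset, card_incidentEdges, hreg v] at this
    simpa using this
  | succ m hm ih =>
    obtain ⟨U, hU, hbd⟩ := ih (by omega)
    obtain ⟨w, -, hw⟩ := exists_mem_notMem_of_card_lt_card (s := U) (t := univ)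
      (by rw [card_univ]; omega)
    obtain ⟨u, hu⟩ := card_pos.1 (hU ▸ hm : 0 < U.card)
    obtain ⟨dart, -, ha, hx⟩ :=
      (hconn.preconnected u w).some.exists_boundary_dart (U : Set V) hu hw
    set a := dart.toProd.1
    set x := dart.toProd.2
    have hax : s(a, x) ∈ edgeBoundary G U := ⟨dart.adj, a, x, rfl, ha, hx⟩
    have hxa : s(a, x) ∈ incidentEdges G x :=
      (mem_incidentEdges G).2 ⟨dart.adj, Sym2.mem_mk_right a x⟩
    refine ⟨insert x U, by rw [card_insert_of_notMem hx, hU], ?_⟩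
    have := (Set.ncard_le_ncard (edgeBoundary_insert_subset G ha hx) (Set.toFinite _)).trans
      (Set.ncard_union_le _ _)
    rw [Set.ncard_sdiff_singleton_of_mem hax, Set.ncard_coe_finset, card_erase_of_mem hxa,
      card_incidentEdges, hreg x] at this
    have hbd_pos : 0 < (edgeBoundary G U).ncard := Set.ncard_pos (Set.toFinite _) |>.2 ⟨_, hax⟩
    have hd_pos : 0 < d := hreg x ▸ (card_incidentEdges G x ▸ card_pos.2 ⟨_, hxa⟩)
    rw [Nat.mul_succ]
    omega

lemma IsEdgeExpander.mul_add_le {s d : ℕ} {δ : ℝ} (hexp : IsEdgeExpander G s δ)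
    (hconn : G.Connected) (hreg : G.IsRegularOfDegree d) (hs : 1 ≤ s)
    (hsV : s < Fintype.card V) : δ * s + 2 * ((s : ℝ) - 1) ≤ d * s := by
  obtain ⟨U, hU, hbd⟩ := exists_card_eq_ncard_edgeBoundary_le G hconn hreg hs hsV.le
  have hδ := hexp U hU.le
  rw [hU] at hδ
  have hbd' : ((edgeBoundary G U).ncard : ℝ) + 2 * ((s : ℝ) - 1) ≤ d * s := by
    have := (Nat.cast_le (α := ℝ)).2 hbd
    push_cast [Nat.cast_sub hs] at this
    exact this
  linarith

lemma IsEdgeExpander.three_le_degree {s d : ℕ} {δ : ℝ} (hexp : IsEdgeExpander G s δ)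
    (hconn : G.Connected) (hreg : G.IsRegularOfDegree d) (hs : 1 ≤ s)
    (hsV : s < Fintype.card V) (hlarge : (d : ℝ) * (d + 1) < δ * s) : 3 ≤ d := by
  by_contra! hd
  have hd2 : (d : ℝ) ≤ 2 := by exact_mod_cast Nat.lt_succ_iff.1 hd
  have hs' : (1 : ℝ) ≤ s := by exact_mod_cast hs
  nlinarith [hexp.mul_add_le hconn hreg hs hsV, mul_nonneg (sub_nonneg.2 hd2) (sub_nonneg.2 hs'),
    d.cast_nonneg (α := ℝ)]

end Graph

section Parity

variable {V : Type} [Fintype V] [DecidableEq V] (G : SimpleGraph V) [DecidableRel G.Adj]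

lemma satParity_congr {χ : V → ZMod 2} {α β : Sym2 V → Bool} {v : V}
    (h : ∀ e ∈ incidentEdges G v, α e = β e) : SatParity G χ α v ↔ SatParity G χ β v := by
  unfold SatParity
  rw [sum_congr rfl fun e he => by rw [h e he]]

lemma satParity_update_of_notMem {χ : V → ZMod 2} {α : Sym2 V → Bool} {x : Sym2 V} {v : V}
    (hx : x ∉ incidentEdges G v) (b : Bool) :
    SatParity G χ (Function.update α x b) v ↔ SatParity G χ α v :=
  satParity_congr G fun _ he => Function.update_of_ne (ne_of_mem_of_not_mem he hx) _ _

lemma satParity_update_not_of_mem {χ : V → ZMod 2} {α : Sym2 V → Bool} {x : Sym2 V} {v : V}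
    (hx : x ∈ incidentEdges G v) (h : ¬ SatParity G χ α v) :
    SatParity G χ (Function.update α x (!α x)) v := by
  unfold SatParity at h ⊢
  rw [← add_sum_erase _ _ hx] at h ⊢
  rw [sum_congr rfl fun e he => by rw [Function.update_of_ne (ne_of_mem_erase he)],
    Function.update_self]
  have flip : ∀ (b : Bool) (r c : ZMod 2),
      (if b then 1 else 0) + r ≠ c → (if !b then 1 else 0) + r = c := by decide
  exact flip _ _ _ h

variable {G} in
lemma SimpleGraph.Walk.exists_sum_incidentEdges_eq {u w : V} (p : G.Walk u w) :
    ∃ x : Sym2 V → ZMod 2, ∀ v,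
      ∑ e ∈ incidentEdges G v, x e = (Pi.single u 1 + Pi.single w 1 : V → ZMod 2) v := by
  induction p with
  | nil => exact ⟨0, fun v => by simp [CharTwo.add_self_eq_zero]⟩
  | @cons u c w hadj p ih =>
    obtain ⟨x, hx⟩ := ih
    refine ⟨Pi.single s(u, c) 1 + x, fun v => ?_⟩
    have hedge : ∑ e ∈ incidentEdges G v, Pi.single s(u, c) (1 : ZMod 2) e
        = (Pi.single u 1 + Pi.single c 1 : V → ZMod 2) v := by
      rw [sum_pi_single']
      by_cases hvu : v = u
      · subst hvu
        simp [mem_incidentEdges, hadj, hadj.ne]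
      · by_cases hvc : v = c
        · subst hvc
          simp [mem_incidentEdges, hadj, hvu]
        · simp [mem_incidentEdges, hvu, hvc]
    simp only [Pi.add_apply, sum_add_distrib, hedge, hx]
    rw [add_assoc, ← add_assoc (Pi.single c _ v), CharTwo.add_self_eq_zero, zero_add]

/-- Summing `χ u` times the edges of a walk from `u` to a fixed `w ∉ U`, over `u ∈ U`, puts the
charge `χ u` on each `u ∈ U` and dumps the remainder on `w`. -/
lemma exists_satParity_of_ne_univ (hconn : G.Connected) (χ : V → ZMod 2) {U : Finset V}
    (hU : U ≠ univ) : ∃ α, ∀ u ∈ U, SatParity G χ α u := by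
  obtain ⟨w, hw⟩ : ∃ w, w ∉ U := by
    by_contra! h
    exact hU (eq_univ_iff_forall.2 h)
  choose x hx using fun u => (hconn.preconnected u w).some.exists_sum_incidentEdges_eq
  refine ⟨fun e => ∑ u ∈ U, χ u * x u e = 1, fun v hv => ?_⟩
  have hbool : ∀ z : ZMod 2, (if decide (z = 1) = true then (1 : ZMod 2) else 0) = z := by
    decide
  have hvw : v ≠ w := ne_of_mem_of_not_mem hv hw
  unfold SatParity
  simp only [hbool]
  rw [sum_comm]
  simp only [← mul_sum, hx, Pi.add_apply, Pi.single_apply, if_neg hvw, add_zero, mul_ite,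
    mul_one, mul_zero, sum_ite_eq, if_pos hv]

end Parity

section LocalConsistency

variable {V : Type} [Fintype V] [DecidableEq V] (G : SimpleGraph V) [DecidableRel G.Adj]
  (χ : V → ZMod 2)

def IsLocallyConsistent (s : ℕ) (ρ : Finset (Lit (Sym2 V))) : Prop :=
  ∀ U : Finset V, U.card ≤ s → ∃ α, SatTerm α ρ ∧ ∀ u ∈ U, SatParity G χ α u

def Forces (ρ : Finset (Lit (Sym2 V))) (U : Finset V) (e : Sym2 V) (b : Bool) : Prop :=
  ∀ α, SatTerm α ρ → (∀ u ∈ U, SatParity G χ α u) → α e = b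

variable {G χ}

lemma IsLocallyConsistent.mono {s : ℕ} {ρ ρ' : Finset (Lit (Sym2 V))} (h : ρ' ⊆ ρ)
    (hρ : IsLocallyConsistent G χ s ρ) : IsLocallyConsistent G χ s ρ' := fun U hU =>
  let ⟨α, hα, hpar⟩ := hρ U hU
  ⟨α, fun l hl => hα l (h hl), hpar⟩

lemma IsLocallyConsistent.exists_satTerm {s : ℕ} {ρ : Finset (Lit (Sym2 V))}
    (hρ : IsLocallyConsistent G χ s ρ) : ∃ α, SatTerm α ρ :=
  let ⟨α, hα, _⟩ := hρ ∅ (Nat.zero_le s)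
  ⟨α, hα⟩

lemma isLocallyConsistent_empty (hconn : G.Connected) {s : ℕ} (hsV : s < Fintype.card V) :
    IsLocallyConsistent G χ s ∅ := fun U hU =>
  let ⟨α, hα⟩ := exists_satParity_of_ne_univ G hconn χ fun h => by
    rw [h, card_univ] at hU
    omega
  ⟨α, fun l hl => absurd hl (notMem_empty l), hα⟩

/-- Flipping the edge `s(a, c)` repairs the parity at `a` without touching `ρ`, `e`, or any
other vertex of `U`, so the constraint at `a` is not needed. -/
lemma Forces.erase {ρ : Finset (Lit (Sym2 V))} {U : Finset V} {e : Sym2 V} {b : Bool}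
    (h : Forces G χ ρ U e b) {a c : V} (hac : s(a, c) ∈ G.edgeSet) (ha : a ∈ U) (hc : c ∉ U)
    (he : s(a, c) ≠ e) (hρ : s(a, c) ∉ ρ.image Prod.fst) : Forces G χ ρ (U.erase a) e b := by
  intro α hα hpar
  by_cases hpa : SatParity G χ α a
  · refine h α hα fun u hu => ?_
    by_cases hua : u = a
    · exact hua ▸ hpa
    · exact hpar u (mem_erase.2 ⟨hua, hu⟩)
  set x := s(a, c)
  have hα' : SatTerm (Function.update α x (!α x)) ρ := by
    intro l hl
    have hlx : l.1 ≠ x := fun hlx => hρ (mem_image.2 ⟨l, hl, hlx⟩)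
    simpa [SatLit, Function.update_of_ne hlx] using hα l hl
  have hpar' : ∀ u ∈ U, SatParity G χ (Function.update α x (!α x)) u := by
    intro u hu
    by_cases hua : u = a
    · subst hua
      exact satParity_update_not_of_mem G ((mem_incidentEdges G).2 ⟨hac, Sym2.mem_mk_left _ _⟩)
        hpa
    · have hx : x ∉ incidentEdges G u := by
        rw [mem_incidentEdges]
        rintro ⟨-, hux⟩
        rcases Sym2.mem_iff.1 hux with rfl | rfl
        exacts [hua rfl, hc hu]
      exact (satParity_update_of_notMem G hx _).2 (hpar u (mem_erase.2 ⟨hua, hu⟩))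
  simpa [Function.update_of_ne he.symm] using h _ hα' hpar'

lemma Forces.exists_edgeBoundary_subset {ρ : Finset (Lit (Sym2 V))} {U : Finset V}
    {e : Sym2 V} {b : Bool} (h : Forces G χ ρ U e b) :
    ∃ U' ⊆ U, Forces G χ ρ U' e b ∧
      edgeBoundary G U' ⊆ ((insert e (ρ.image Prod.fst) : Finset (Sym2 V)) : Set (Sym2 V)) := by
  induction U using Finset.strongInduction with
  | H U ih =>
    by_cases hU :
        edgeBoundary G U ⊆ ((insert e (ρ.image Prod.fst) : Finset (Sym2 V)) : Set (Sym2 V))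
    · exact ⟨U, Subset.rfl, h, hU⟩
    obtain ⟨x, ⟨hx, a, c, rfl, ha, hc⟩, hxS⟩ := Set.not_subset.1 hU
    simp only [coe_insert, Set.mem_insert_iff, mem_coe, not_or] at hxS
    obtain ⟨U', hU', hforce, hbd⟩ := ih _ (erase_ssubset ha) (h.erase hx ha hc hxS.1 hxS.2)
    exact ⟨U', hU'.trans (erase_subset a U), hforce, hbd⟩

lemma exists_forces_of_not_isLocallyConsistent_insert {s : ℕ} {ρ : Finset (Lit (Sym2 V))}
    {e : Sym2 V} {b : Bool} (h : ¬ IsLocallyConsistent G χ s (insert (e, !b) ρ)) :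
    ∃ U : Finset V, U.card ≤ s ∧ Forces G χ ρ U e b ∧
      edgeBoundary G U ⊆ ((insert e (ρ.image Prod.fst) : Finset (Sym2 V)) : Set (Sym2 V)) := by
  simp only [IsLocallyConsistent, not_forall, not_exists, not_and] at h
  obtain ⟨U, hU, hno⟩ := h
  have hforce : Forces G χ ρ U e b := fun α hα hpar => by
    by_contra hne
    obtain ⟨u, hu, hnu⟩ := hno α (forall_mem_insert _ _ _ |>.2 ⟨Bool.eq_not_iff.2 hne, hα⟩)
    exact hnu (hpar u hu)
  obtain ⟨U', hU', hforce', hbd⟩ := hforce.exists_edgeBoundary_subset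
  exact ⟨U', (card_le_card hU').trans hU, hforce', hbd⟩

end LocalConsistency

section Blocking

variable {V : Type} [Fintype V] [DecidableEq V] {G : SimpleGraph V} [DecidableRel G.Adj]
  {χ : V → ZMod 2} {s : ℕ} {ρ : Finset (Lit (Sym2 V))}

lemma IsLocallyConsistent.lt_card_union_biUnion (hρ : IsLocallyConsistent G χ s ρ) {v : V}
    {f : Sym2 V → Bool} (hf : ¬ SatParity G χ f v) {W : Sym2 V → Finset V}
    (hW : ∀ e ∈ incidentEdges G v, Forces G χ ρ (W e) e (f e)) :
    s < ({v} ∪ (incidentEdges G v).biUnion W).card := by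
  by_contra! hle
  obtain ⟨α, hα, hpar⟩ := hρ _ hle
  have hv := hpar v (mem_union_left _ (mem_singleton_self v))
  refine hf ((satParity_congr G fun e he => ?_).1 hv)
  exact hW e he α hα fun u hu => hpar u (mem_union_right _ (mem_biUnion.2 ⟨e, he, hu⟩))

/-- The forcing sets of the edges at `v`, together with `v`, exceed `s` vertices; cut their union
just before it does and apply expansion to both pieces. -/
theorem IsLocallyConsistent.mul_add_one_le {δ : ℝ} (hexp : IsEdgeExpander G s δ) (hδ : 0 ≤ δ)
    (hs : 1 ≤ s) (hρ : IsLocallyConsistent G χ s ρ) {v : V} {f : Sym2 V → Bool}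
    (hf : ¬ SatParity G χ f v)
    (hblocked : ∀ e ∈ incidentEdges G v, ¬ IsLocallyConsistent G χ s (insert (e, !f e) ρ)) :
    δ * (s + 1) ≤ 2 * ρ.card + (incidentEdges G v).card + 1 := by
  set N := incidentEdges G v
  set dom := ρ.image Prod.fst
  have hforce : ∀ e, ∃ U : Finset V, e ∈ N → U.card ≤ s ∧ Forces G χ ρ U e (f e) ∧
      edgeBoundary G U ⊆ ((insert e dom : Finset (Sym2 V)) : Set (Sym2 V)) := by
    intro e
    by_cases he : e ∈ N
    · exact (exists_forces_of_not_isLocallyConsistent_insert (hblocked e he)).imp fun _ h _ => h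
    · exact ⟨∅, fun h => absurd h he⟩
  choose W hW using hforce
  obtain ⟨T, hTN, e₀, he₀, hsmall, hsplit⟩ := exists_subset_card_union_biUnion_le {v} W
    (by rwa [card_singleton]) (hρ.lt_card_union_biUnion hf fun e he => (hW e he).2.1)
  have hbd :
      edgeBoundary G ({v} ∪ T.biUnion W) ⊆ ((dom ∪ N : Finset (Sym2 V)) : Set (Sym2 V)) := by
    refine edgeBoundary_union_biUnion_subset (fun x hx => ?_) fun e he x hx => ?_
    · exact mem_coe.2 (mem_union_right _ (edgeBoundary_singleton_subset G v hx))
    · rcases mem_insert.1 ((hW e (hTN he)).2.2 hx) with rfl | hxdom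
      · exact mem_union_right _ (hTN he)
      · exact mem_union_left _ hxdom
  have hcut := hexp.mul_card_le_card hsmall hbd
  have hlast := hexp.mul_card_le_card (hW e₀ he₀).1 (hW e₀ he₀).2.2
  have hdom : dom.card ≤ ρ.card := card_image_le
  have h₁ : ((dom ∪ N).card : ℝ) ≤ ρ.card + N.card := by
    exact_mod_cast (card_union_le _ _).trans (by omega)
  have h₂ : ((insert e₀ dom).card : ℝ) ≤ ρ.card + 1 := by
    exact_mod_cast (card_insert_le _ _).trans (by omega)
  have h₃ : (s : ℝ) + 1 ≤ ({v} ∪ T.biUnion W).card + (W e₀).card := by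
    exact_mod_cast Nat.succ_le_of_lt hsplit
  nlinarith [mul_le_mul_of_nonneg_left h₃ hδ]

end Blocking

section Tseitin

variable {V : Type} [Fintype V] [DecidableEq V] (G : SimpleGraph V) [DecidableRel G.Adj]
  {χ : V → ZMod 2}

lemma mem_tseitin {A : Clause (Sym2 V)} :
    A ∈ Tseitin G χ ↔ ∃ v f, ¬ SatParity G χ f v ∧
      A = (incidentEdges G v).image fun e => (e, !f e) := by
  simp [Tseitin, parityCNF, SatParity]

lemma card_of_mem_tseitin {d : ℕ} (hreg : G.IsRegularOfDegree d) {A : Clause (Sym2 V)}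
    (hA : A ∈ Tseitin G χ) : A.card = d := by
  obtain ⟨v, f, -, rfl⟩ := (mem_tseitin G).1 hA
  rw [card_image_of_injective _ fun e e' h => (Prod.mk.inj h).1, card_incidentEdges, hreg v]

variable {G}

theorem ResRefutation.exists_mul_add_one_le_card_conf {d s : ℕ} {δ : ℝ} (hconn : G.Connected)
    (hreg : G.IsRegularOfDegree d) (hexp : IsEdgeExpander G s δ) (hδ : 0 ≤ δ) (hs : 1 ≤ s)
    (hsV : s < Fintype.card V) (π : ResRefutation (Tseitin G χ)) :
    ∃ t ≤ π.len, δ * (s + 1) ≤ 2 * (π.conf t).card + d + 1 := by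
  obtain ⟨t, ht, A, hA, -, ρ, hρ, -, hcard, hblocked⟩ :=
    π.exists_blocked_download (IsLocallyConsistent G χ s) (fun _ _ h hρ => hρ.mono h)
      (fun _ hρ => hρ.exists_satTerm) (isLocallyConsistent_empty hconn hsV)
  obtain ⟨v, f, hf, rfl⟩ := (mem_tseitin G).1 hA
  have hρv := hρ.mul_add_one_le hexp hδ hs hf fun e he => hblocked _ (mem_image_of_mem _ he)
  rw [card_incidentEdges, hreg v] at hρv
  have hcard' : (ρ.card : ℝ) ≤ (π.conf t).card := by exact_mod_cast hcard
  exact ⟨t, ht.le, by linarith⟩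

end Tseitin

theorem tseitin_space_lower_bound_general {V : Type} [Fintype V] [DecidableEq V]
    (G : SimpleGraph V) [DecidableRel G.Adj] (χ : V → ZMod 2)
    (d s : ℕ) (δ : ℝ) (hconn : G.Connected) (hreg : G.IsRegularOfDegree d)
    (hexp : IsEdgeExpander G s δ)
    (π : ResRefutation (Tseitin G χ)) :
    ∃ t ≤ π.len, δ * (s : ℝ) / (d : ℝ) ≤ ((π.conf t).card : ℝ) := by
  rcases le_or_gt (δ * s) (d * (d + 1)) with hsmall | hlarge
  · obtain ⟨t, ht, hcard⟩ := π.exists_card_conf_gt fun A hA => (card_of_mem_tseitin G hreg hA).ge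
    refine ⟨t, ht, div_le_of_le_mul₀ d.cast_nonneg (Nat.cast_nonneg _) ?_⟩
    have hcard' : (d : ℝ) + 1 ≤ (π.conf t).card := by exact_mod_cast hcard
    nlinarith [d.cast_nonneg (α := ℝ)]
  have hpos : 0 < δ * s := (by positivity : (0 : ℝ) ≤ d * (d + 1)).trans_lt hlarge
  have hs : 1 ≤ s := Nat.one_le_iff_ne_zero.2 fun h => by simp [h] at hpos
  have hδ : 0 < δ := pos_of_mul_pos_left hpos s.cast_nonneg
  have := hconn.nonempty
  have hsV := hexp.lt_card hδ
  have hd : (3 : ℝ) ≤ d := by exact_mod_cast hexp.three_le_degree hconn hreg hs hsV hlarge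
  obtain ⟨t, ht, hcard⟩ := π.exists_mul_add_one_le_card_conf hconn hreg hexp hδ.le hs hsV
  refine ⟨t, ht, (div_le_iff₀ (by linarith)).2 ?_⟩
  -- `2 d |𝒞| ≥ d δ (s + 1) - d (d + 1) ≥ d δ s - (d - 2) δ s`
  nlinarith

/-- for a connected `d`-regular `(s, δ)`-edge expander `G` and a
charge function `χ` with odd total charge, every resolution refutation of
`Ts(G, χ)` requires clause space at least `δ · s / d`. -/
theorem tseitin_space_lower_bound {V : Type} [Fintype V] [DecidableEq V]
    (G : SimpleGraph V) [DecidableRel G.Adj] (χ : V → ZMod 2)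
    (d s : ℕ) (δ : ℝ) (hconn : G.Connected) (hreg : G.IsRegularOfDegree d)
    (hexp : IsEdgeExpander G s δ) (hodd : ∑ v : V, χ v = 1)
    (π : ResRefutation (Tseitin G χ)) :
    ∃ t ≤ π.len, δ * (s : ℝ) / (d : ℝ) ≤ ((π.conf t).card : ℝ) :=
  tseitin_space_lower_bound_general G χ d s δ hconn hreg hexp π
end

section
/- Let T* be a minimal term implying a configuration C (T* ⊨ C and no proper subterm implies C), with μ(T*) = μ(C), and let V* be a witness vertex set, i.e., |V*| = μ(T*) and T* ∧ ∧_{v∈V*} PARITY_{v,χ} is unsatisfiable while for each u ∈ V*, T* ∧ ∧_{v∈V*∖{u}} PARITY_{v,χ} is satisfiable. Then T* contains, for every edge e ∈ ∂(V*), the variable x_e (in positive or negative form). -/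
lemma sat_parityCNF_iff {V : Type} [Fintype V] [DecidableEq V] (G : SimpleGraph V)
    [DecidableRel G.Adj] (χ : V → ZMod 2) (α : Sym2 V → Bool) (v : V) :
    (∀ C ∈ parityCNF G χ v, SatClause α C) ↔ SatParity G χ α v := by
  constructor
  · intro h
    by_contra hne
    obtain ⟨l, hl, hs⟩ := h _ ⟨α, hne, rfl⟩
    obtain ⟨e, _, rfl⟩ := Finset.mem_image.mp hl
    simp [SatLit] at hs
  · intro hp C hC
    obtain ⟨f, hf, rfl⟩ := hC
    by_contra hno
    apply hf
    rw [← hp]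
    apply Finset.sum_congr rfl
    intro e he
    have : ¬ SatLit α (e, !f e) := fun hs => hno ⟨(e, !f e), Finset.mem_image_of_mem _ he, hs⟩
    simp only [SatLit] at this
    cases hfe : f e <;> cases hae : α e <;> simp_all

lemma sum_flip {V : Type} [DecidableEq V] (s : Finset (Sym2 V)) (e : Sym2 V)
    (he : e ∈ s) (α : Sym2 V → Bool) :
    (∑ x ∈ s, (if Function.update α e (!α e) x then (1 : ZMod 2) else 0)) =
      (∑ x ∈ s, (if α x then (1 : ZMod 2) else 0)) + 1 := by
  rw [← Finset.add_sum_erase _ _ he, ← Finset.add_sum_erase _ _ he]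
  have h1 : ∀ x ∈ s.erase e, (if Function.update α e (!α e) x then (1 : ZMod 2) else 0)
      = (if α x then (1 : ZMod 2) else 0) := by
    intro x hx
    rw [Function.update_of_ne (Finset.ne_of_mem_erase hx)]
  rw [Finset.sum_congr rfl h1, Function.update_self]
  have h2 : (if (!α e) then (1 : ZMod 2) else 0) = (if α e then (1 : ZMod 2) else 0) + 1 := by
    cases α e <;> decide
  rw [h2]
  ring

lemma sum_noflip {V : Type} [DecidableEq V] (s : Finset (Sym2 V)) (e : Sym2 V)
    (he : e ∉ s) (α : Sym2 V → Bool) :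
    (∑ x ∈ s, (if Function.update α e (!α e) x then (1 : ZMod 2) else 0)) =
      (∑ x ∈ s, (if α x then (1 : ZMod 2) else 0)) := by
  apply Finset.sum_congr rfl
  intro x hx
  rw [Function.update_of_ne (fun h : x = e => he (by rw [← h]; exact hx))]

/-- let `T*` be a minimal term implying a configuration `𝒞` with
`μ(T*) = μ(𝒞)`, and let `V*` be a witness vertex set for `μ(T*)` (of size
`μ(T*)`, contradicting `T*` together with its parity axioms, and minimal in that
removing any vertex leaves the conjunction satisfiable). Then `T*` mentions the
variable `x_e` (positively or negatively) for every boundary edge `e ∈ ∂(V*)`. -/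
theorem witness_term_covers_boundary {V : Type} [Fintype V] [DecidableEq V]
    (G : SimpleGraph V) [DecidableRel G.Adj] (χ : V → ZMod 2)
    (𝒞 : Config (Sym2 V)) (Tstar : Finset (Lit (Sym2 V)))
    (himp : ∀ α : Sym2 V → Bool, SatTerm α Tstar → SatConfig α 𝒞)
    (hmin : ∀ T' ⊂ Tstar, ¬ ∀ α : Sym2 V → Bool, SatTerm α T' → SatConfig α 𝒞)
    (hmu : muT G χ Tstar = muC G χ 𝒞)
    (Vstar : Finset V) (hcard : Vstar.card = muT G χ Tstar)
    (hunsat : UnsatWith G χ Tstar Vstar)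
    (hminwit : ∀ u ∈ Vstar, ¬ UnsatWith G χ Tstar (Vstar.erase u)) :
    ∀ e ∈ edgeBoundary G Vstar, ∃ b : Bool, (e, b) ∈ Tstar := by
  intro e he
  obtain ⟨heE, a, b, hab, haV, hbV⟩ := he
  by_contra hne
  push_neg at hne
  obtain ⟨α, hT, hpar⟩ := not_not.mp (hminwit a haV)
  set α' := Function.update α e (!α e) with hα'
  apply hunsat
  have heI : e ∈ incidentEdges G a := by
    rw [incidentEdges, Finset.mem_filter, SimpleGraph.mem_edgeFinset]
    exact ⟨heE, by rw [hab]; simp⟩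
  -- α violates the parity at a
  have hviol : ¬ SatParity G χ α a := by
    intro hsp
    apply hunsat
    refine ⟨α, hT, fun v hv => ?_⟩
    rcases eq_or_ne v a with rfl | hva
    · exact (sat_parityCNF_iff G χ α v).mpr hsp
    · exact hpar v (Finset.mem_erase.mpr ⟨hva, hv⟩)
  refine ⟨α', ?_, fun v hv => (sat_parityCNF_iff G χ α' v).mpr ?_⟩
  · intro l hl
    have hle : l.1 ≠ e := by
      intro h
      exact hne l.2 (by rw [← h, Prod.mk.eta]; exact hl)
    have := hT l hl
    simpa [SatLit, hα', Function.update_of_ne hle] using this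
  · rcases eq_or_ne v a with rfl | hva
    · have key : ∀ x y : ZMod 2, x ≠ y → x = y + 1 := by decide
      have hsum : (∑ x ∈ incidentEdges G v, (if α x then (1 : ZMod 2) else 0)) = χ v + 1 := by
        unfold SatParity at hviol
        exact key _ _ hviol
      unfold SatParity
      rw [sum_flip _ _ heI, hsum, add_assoc, show (1 : ZMod 2) + 1 = 0 from rfl, add_zero]
    · have hvI : e ∉ incidentEdges G v := by
        simp only [incidentEdges, Finset.mem_filter, hab, Sym2.mem_iff, not_and_or]
        right
        rintro (rfl | rfl)
        · exact hva rfl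
        · exact hbV hv
      unfold SatParity
      rw [sum_noflip _ _ hvI]
      exact (sat_parityCNF_iff G χ α v).mp (hpar v (Finset.mem_erase.mpr ⟨hva, hv⟩))
end
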